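/- arXiv:2503.22267 — 5 statements merged into one kernel-verified Lean document; each statement's English description precedes it below -/
import Mathlib

section
/- Let A ⊆ ℝ^d be an open increasing set whose complement is convex and with 0 ∉ closure(A), and let X be a random vector supported in [0,∞)^d. Then Y_A := sup{u > 0 : X ∈ u·A} satisfies P[Y_A > x] = P[X ∈ x·A] for all x > 0. -/
open MeasureTheory ProbabilityTheory Filter Set Pointwise Asymptotics

/-- A set `A ⊆ ℝ^d` is increasing if `x ∈ A` and `y ≥ 0` componentwise imply `x + y ∈ A`. -/
def IncreasingSet {d : ℕ} (A : Set (Fin d → ℝ)) : Prop :=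
  ∀ x ∈ A, ∀ y : Fin d → ℝ, (∀ i, 0 ≤ y i) → x + y ∈ A

/-- The family 𝓡 of open increasing sets with convex complement and `0 ∉ closure A`. -/
def MemR {d : ℕ} (A : Set (Fin d → ℝ)) : Prop :=
  IsOpen A ∧ IncreasingSet A ∧ Convex ℝ Aᶜ ∧ (0 : Fin d → ℝ) ∉ closure A

/-- `P[X ∈ x·A]`. -/
noncomputable def probIn {d : ℕ} {Ω : Type*} [MeasurableSpace Ω] (P : Measure Ω)
    (X : Ω → (Fin d → ℝ)) (A : Set (Fin d → ℝ)) (x : ℝ) : ℝ :=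
  (P {ω | X ω ∈ x • A}).toReal

/-- `Y_A = sup{u > 0 : X ∈ u·A}`. -/
noncomputable def YA {d : ℕ} {Ω : Type*} (X : Ω → (Fin d → ℝ)) (A : Set (Fin d → ℝ))
    (ω : Ω) : ℝ :=
  sSup {u : ℝ | 0 < u ∧ X ω ∈ u • A}

/-- The tail of the distribution `F_A` of `Y_A`. -/
noncomputable def tailYA {d : ℕ} {Ω : Type*} [MeasurableSpace Ω] (P : Measure Ω)
    (X : Ω → (Fin d → ℝ)) (A : Set (Fin d → ℝ)) (x : ℝ) : ℝ :=
  (P {ω | x < YA X A ω}).toReal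

/-- A (positive) tail function is long-tailed: `T(x−a)/T(x) → 1` for every `a > 0`. -/
def LongTailedFun (T : ℝ → ℝ) : Prop :=
  (∀ x, 0 < T x) ∧ ∀ a > 0, Tendsto (fun x => T (x - a) / T x) atTop (nhds 1)

/-- The mean `μ_V = ∫₀^∞ V̄(y) dy` computed from the tail function. -/
noncomputable def tailMean (T : ℝ → ℝ) : ℝ := ∫ y in Ioi (0 : ℝ), T y

/-- Strong subexponentiality (class 𝒮*) of a tail function:
`∫₀^x T(x−y)T(y) dy ∼ 2 μ T(x)`, with `μ = ∫₀^∞ T < ∞` and `T > 0`. -/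
def StrongSubexpFun (T : ℝ → ℝ) : Prop :=
  (∀ x, 0 < T x) ∧ IntegrableOn T (Ioi 0) volume ∧
    Tendsto (fun x => (∫ y in (0 : ℝ)..x, T (x - y) * T y) / T x) atTop
      (nhds (2 * tailMean T))

/-- `V̄_u(x) = min(1, ∫_x^{x+u} V̄(y) dy)`. -/
noncomputable def tailU (T : ℝ → ℝ) (u x : ℝ) : ℝ := min 1 (∫ y in x..(x + u), T y)

/-- Strongly subexponential (class 𝒮_*): `V̄_u^{2*}(x)/V̄_u(x) → 2` uniformly in `u ∈ [1,∞)`,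
where `V̄_u^{2*}` is the tail of the sum of two independent random variables with tail `V̄_u`. -/
def StronglySubexpFun (T : ℝ → ℝ) : Prop :=
  (∀ x, 0 < T x) ∧ IntegrableOn T (Ioi 0) volume ∧
    ∀ ε > (0 : ℝ), ∃ x₀ : ℝ, ∀ u ≥ (1 : ℝ), ∀ x ≥ x₀,
      ∀ (Ω' : Type) (_ : MeasurableSpace Ω') (Q : Measure Ω'), IsProbabilityMeasure Q →
        ∀ Z₁ Z₂ : Ω' → ℝ, Measurable Z₁ → Measurable Z₂ → IndepFun Z₁ Z₂ Q →
          (∀ z, (Q {ω | z < Z₁ ω}).toReal = tailU T u z) →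
          (∀ z, (Q {ω | z < Z₂ ω}).toReal = tailU T u z) →
          |(Q {ω | x < Z₁ ω + Z₂ ω}).toReal / tailU T u x - 2| < ε

/-- Insensitivity function of a tail function. -/
def Insensitivity (T : ℝ → ℝ) (h : ℝ → ℝ) : Prop :=
  (∀ x, 0 < h x) ∧ Tendsto h atTop atTop ∧ Tendsto (fun x => h x / x) atTop (nhds 0) ∧
    Tendsto (fun x => T (x - h x) / T x) atTop (nhds 1) ∧
    Tendsto (fun x => T (x + h x) / T x) atTop (nhds 1)

/-- Generalized inverse of `h`. -/
noncomputable def geninv (h : ℝ → ℝ) (y : ℝ) : ℝ := sInf {x | 0 ≤ x ∧ y ≤ h x}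

/-- For `A ∈ 𝓡` and a nonnegative random vector `X`, the variable
`Y_A = sup{u > 0 : X ∈ u·A}` satisfies `P[Y_A > x] = P[X ∈ x·A]` for all `x > 0`. -/
theorem statement1 {d : ℕ} (A : Set (Fin d → ℝ)) (hA : MemR A)
    {Ω : Type*} [MeasurableSpace Ω] (P : Measure Ω) [IsProbabilityMeasure P]
    (X : Ω → (Fin d → ℝ)) (hX : Measurable X) (hXpos : ∀ ω i, 0 ≤ X ω i) :
    ∀ x > (0 : ℝ), P {ω | x < YA X A ω} = P {ω | X ω ∈ x • A} := by
  obtain ⟨hopen, hinc, hconv, hcl⟩ := hA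
  -- separation from 0
  obtain ⟨ε, hε, hsep⟩ : ∃ ε > 0, ∀ a ∈ A, ε ≤ ‖a‖ := by
    rw [Metric.mem_closure_iff] at hcl
    push_neg at hcl
    obtain ⟨ε, hε, h⟩ := hcl
    refine ⟨ε, hε, fun a ha => ?_⟩
    have := h a ha
    rwa [dist_zero_left] at this
  intro x hx
  congr 1
  ext ω
  simp only [Set.mem_setOf_eq, YA]
  set S := {u : ℝ | 0 < u ∧ X ω ∈ u • A} with hS
  have hbdd : BddAbove S := by
    refine ⟨‖X ω‖ / ε, fun u hu => ?_⟩
    obtain ⟨hu0, a, ha, hXa⟩ := hu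
    have hnorm : ‖X ω‖ = u * ‖a‖ := by
      rw [← hXa]; simp [norm_smul, abs_of_pos hu0]
    rw [le_div_iff₀ hε, hnorm]
    exact mul_le_mul_of_nonneg_left (hsep a ha) hu0.le
  have hdown : ∀ u ∈ S, ∀ v : ℝ, 0 < v → v ≤ u → v ∈ S := by
    rintro u ⟨hu0, hua⟩ v hv0 hvu
    refine ⟨hv0, ?_⟩
    rw [Set.mem_smul_set_iff_inv_smul_mem₀ hv0.ne'] at *
    rw [Set.mem_smul_set_iff_inv_smul_mem₀ hu0.ne'] at hua
    have key : v⁻¹ • X ω = u⁻¹ • X ω + (v⁻¹ - u⁻¹) • X ω := by module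
    rw [key]
    refine hinc _ hua _ fun i => ?_
    have hcoef : (0:ℝ) ≤ v⁻¹ - u⁻¹ := by
      have := inv_anti₀ hv0 hvu
      linarith
    exact mul_nonneg hcoef (hXpos ω i)
  constructor
  · intro hlt
    have hne : S.Nonempty := by
      by_contra h
      rw [Set.not_nonempty_iff_eq_empty] at h
      rw [h, Real.sSup_empty] at hlt
      linarith
    obtain ⟨u, huS, hxu⟩ := exists_lt_of_lt_csSup hne hlt
    exact (hdown u huS x hx hxu.le).2
  · intro hmem
    -- find u > x with X ω ∈ u • A
    have hxne : x ≠ 0 := hx.ne'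
    rw [Set.mem_smul_set_iff_inv_smul_mem₀ hxne] at hmem
    have hcont : ContinuousAt (fun u : ℝ => u⁻¹ • X ω) x :=
      ((continuousAt_inv₀ hxne).smul continuousAt_const)
    have hnhds : (fun u : ℝ => u⁻¹ • X ω) ⁻¹' A ∈ nhds x :=
      hcont.preimage_mem_nhds (hopen.mem_nhds hmem)
    obtain ⟨l, r, hmemI, hsub⟩ := mem_nhds_iff_exists_Ioo_subset.mp hnhds
    set t := (x + r) / 2 with ht
    have hxt : x < t := by simp only [ht]; linarith [hmemI.2]
    have htr : t < r := by simp only [ht]; linarith [hmemI.2]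
    have htS : t ∈ S := by
      refine ⟨hx.trans hxt, ?_⟩
      rw [Set.mem_smul_set_iff_inv_smul_mem₀ (hx.trans hxt).ne']
      exact hsub ⟨hmemI.1.trans hxt, htr⟩
    exact hxt.trans_le (le_csSup hbdd htS)
end

section
/- Let A ∈ 𝓡 be fixed and let X⁽¹⁾, X⁽²⁾ be random vectors in [0,∞)^d with distributions F₁, F₂. If F₁ ∈ 𝒮*_A (i.e. the distribution F_A⁽¹⁾ of Y_A⁽¹⁾ = sup{u : X⁽¹⁾ ∈ uA} is strong subexponential), F₂ ∈ 𝓛_A (i.e. F_A⁽²⁾ is long-tailed), and P[X⁽¹⁾ ∈ xA] ≍ P[X⁽²⁾ ∈ xA] (each is big-O of the other as x → ∞), then F₂ ∈ 𝒮*_A. -/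
open MeasureTheory ProbabilityTheory Filter Set Pointwise Asymptotics

/-!
Because `X ≥ 0`, `A` is increasing and `0 ∉ closure A`, for `x > 0` and `a > 0`
`{Y_A > x} ⊆ {X ∈ xA} ⊆ {Y_A > x - a}`; with the long tail of `F_A⁽²⁾` this turns
`P[X⁽¹⁾ ∈ xA] ≍ P[X⁽²⁾ ∈ xA]` into `T₁ ≍ T₂` for the tails `Tᵢ` of `F_A⁽ⁱ⁾`. The rest is
one-dimensional: split `∫₀^x T(x-y) T(y) dy` at `a` and `x - a`. The two outer pieces lie between
`T(x) ∫₀^a T` and `T(x - a) ∫₀^a T`, so for the long-tailed `T₂` they are `≈ T₂(x) ∫₀^a T₂`. For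
`T₁ ∈ 𝒮*` the middle piece is therefore at most `(2μ₁ - 2∫₀^a T₁ + o(1)) T₁(x)`, and
comparability `T₂ ≤ C T₁`, `T₁ ≤ C T₂` bounds the middle piece of `T₂` by `C³` times that
(relative to `T₂(x)`); letting `a → ∞` squeezes the ratio to `2μ₂`.
-/

theorem tendsto_of_eventually_squeezed {α β γ : Type*} [TopologicalSpace γ] [LinearOrder γ]
    [OrderTopology γ] {l : Filter α} {l' : Filter β} [l'.NeBot] {f : α → γ} {lo up : β → γ}
    {g : β → α → γ} {c : γ} (hlo : Tendsto lo l' (nhds c)) (hup : Tendsto up l' (nhds c))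
    (hg : ∀ᶠ b in l', Tendsto (g b) l (nhds (up b)))
    (hf : ∀ᶠ b in l', ∀ᶠ x in l, lo b ≤ f x ∧ f x ≤ g b x) :
    Tendsto f l (nhds c) := by
  refine tendsto_order.2 ⟨fun m hm => ?_, fun M hM => ?_⟩
  · obtain ⟨b, hb, hfb⟩ := ((hlo.eventually (eventually_gt_nhds hm)).and hf).exists
    exact hfb.mono fun x hx => hb.trans_le hx.1
  · obtain ⟨b, hb, hgb, hfb⟩ := ((hup.eventually (eventually_lt_nhds hM)).and (hg.and hf)).exists
    filter_upwards [hgb.eventually (eventually_lt_nhds hb), hfb] with x hgx hfx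
    exact hfx.2.trans_lt hgx

section SelfConvolution

variable {T : ℝ → ℝ}

theorem intervalIntegrable_comp_sub_mul (hT : Antitone T) (h0 : ∀ x, 0 ≤ T x) (x p q : ℝ) :
    IntervalIntegrable (fun y => T (x - y) * T y) volume p q := by
  rw [intervalIntegrable_iff]
  refine (hT.intervalIntegrable (a := p) (b := q)).def'.bdd_mul (c := T (x - max p q))
    (hT.measurable.comp (measurable_const.sub measurable_id)).aestronglyMeasurable ?_
  refine ae_restrict_of_forall_mem measurableSet_uIoc fun y hy => ?_
  rw [Real.norm_of_nonneg (h0 _)]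
  exact hT (sub_le_sub_left hy.2 x)

theorem integral_comp_sub_mul_eq_two_mul_add (hT : Antitone T) (h0 : ∀ x, 0 ≤ T x) (a x : ℝ) :
    ∫ y in (0 : ℝ)..x, T (x - y) * T y =
      2 * (∫ y in (0 : ℝ)..a, T (x - y) * T y) + ∫ y in a..(x - a), T (x - y) * T y := by
  have hint := intervalIntegrable_comp_sub_mul hT h0 x
  have hsymm : ∫ y in (x - a)..x, T (x - y) * T y = ∫ y in (0 : ℝ)..a, T (x - y) * T y := by
    have := intervalIntegral.integral_comp_sub_left (fun y => T (x - y) * T y) x (a := 0) (b := a)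
    simp only [sub_sub_cancel, sub_zero] at this
    rw [← this]
    exact intervalIntegral.integral_congr fun y _ => mul_comm _ _
  rw [← intervalIntegral.integral_add_adjacent_intervals (hint 0 a) (hint a x),
    ← intervalIntegral.integral_add_adjacent_intervals (hint a (x - a)) (hint (x - a) x), hsymm]
  ring

theorem mul_integral_le_integral_comp_sub_mul (hT : Antitone T) (h0 : ∀ x, 0 ≤ T x)
    {a : ℝ} (ha : 0 ≤ a) (x : ℝ) :
    T x * ∫ y in (0 : ℝ)..a, T y ≤ ∫ y in (0 : ℝ)..a, T (x - y) * T y := by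
  rw [← intervalIntegral.integral_const_mul]
  refine intervalIntegral.integral_mono_on ha (hT.intervalIntegrable.const_mul _)
    (intervalIntegrable_comp_sub_mul hT h0 x 0 a) fun y hy => ?_
  exact mul_le_mul_of_nonneg_right (hT (by linarith [hy.1])) (h0 y)

theorem integral_comp_sub_mul_le_mul_integral (hT : Antitone T) (h0 : ∀ x, 0 ≤ T x)
    {a : ℝ} (ha : 0 ≤ a) (x : ℝ) :
    ∫ y in (0 : ℝ)..a, T (x - y) * T y ≤ T (x - a) * ∫ y in (0 : ℝ)..a, T y := by
  rw [← intervalIntegral.integral_const_mul]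
  refine intervalIntegral.integral_mono_on ha (intervalIntegrable_comp_sub_mul hT h0 x 0 a)
    (hT.intervalIntegrable.const_mul _) fun y hy => ?_
  exact mul_le_mul_of_nonneg_right (hT (by linarith [hy.2])) (h0 y)

theorem two_mul_integral_le_integral_comp_sub_mul_div (hT : Antitone T) (hpos : ∀ x, 0 < T x)
    {a x : ℝ} (ha : 0 ≤ a) (hx : 2 * a ≤ x) :
    2 * (∫ y in (0 : ℝ)..a, T y) ≤ (∫ y in (0 : ℝ)..x, T (x - y) * T y) / T x := by
  have h0 : ∀ x, 0 ≤ T x := fun x => (hpos x).le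
  rw [le_div_iff₀ (hpos x), integral_comp_sub_mul_eq_two_mul_add hT h0 a x]
  have hhead := mul_integral_le_integral_comp_sub_mul hT h0 ha x
  have hmiddle : 0 ≤ ∫ y in a..(x - a), T (x - y) * T y :=
    intervalIntegral.integral_nonneg (by linarith) fun y _ => mul_nonneg (h0 _) (h0 _)
  linarith

theorem integral_comp_sub_mul_middle_le (hT : Antitone T) (hpos : ∀ x, 0 < T x) {a : ℝ}
    (ha : 0 ≤ a) (x : ℝ) :
    ∫ y in a..(x - a), T (x - y) * T y ≤
      ((∫ y in (0 : ℝ)..x, T (x - y) * T y) / T x - 2 * ∫ y in (0 : ℝ)..a, T y) * T x := by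
  have h0 : ∀ x, 0 ≤ T x := fun x => (hpos x).le
  rw [sub_mul, div_mul_cancel₀ _ (hpos x).ne', integral_comp_sub_mul_eq_two_mul_add hT h0 a x]
  have := mul_integral_le_integral_comp_sub_mul hT h0 ha x
  linarith

end SelfConvolution

section Comparison

variable {T₁ T₂ : ℝ → ℝ}

theorem exists_le_mul_and_le_mul_of_isBigO (h0₁ : ∀ x, 0 ≤ T₁ x) (h0₂ : ∀ x, 0 ≤ T₂ x)
    (h₁₂ : T₁ =O[atTop] T₂) (h₂₁ : T₂ =O[atTop] T₁) :
    ∃ C x₀ : ℝ, 0 ≤ C ∧ ∀ x ≥ x₀, T₂ x ≤ C * T₁ x ∧ T₁ x ≤ C * T₂ x := by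
  obtain ⟨c₁, hc₁, hb₁⟩ := h₁₂.exists_pos
  obtain ⟨c₂, -, hb₂⟩ := h₂₁.exists_pos
  obtain ⟨x₀, hx₀⟩ := eventually_atTop.1
    ((hb₂.weaken (le_max_right c₁ c₂)).bound.and (hb₁.weaken (le_max_left c₁ c₂)).bound)
  refine ⟨max c₁ c₂, x₀, hc₁.le.trans (le_max_left _ _), fun x hx => ?_⟩
  simpa only [Real.norm_of_nonneg (h0₁ x), Real.norm_of_nonneg (h0₂ x)] using hx₀ x hx

theorem integral_comp_sub_mul_le_sq_mul (hT₁ : Antitone T₁) (h0₁ : ∀ x, 0 ≤ T₁ x)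
    (hT₂ : Antitone T₂) (h0₂ : ∀ x, 0 ≤ T₂ x) {C x₀ a x : ℝ} (hC : 0 ≤ C)
    (hcomp : ∀ y ≥ x₀, T₂ y ≤ C * T₁ y) (hax₀ : x₀ ≤ a) (hax : a ≤ x - a) :
    ∫ y in a..(x - a), T₂ (x - y) * T₂ y ≤ C ^ 2 * ∫ y in a..(x - a), T₁ (x - y) * T₁ y := by
  rw [← intervalIntegral.integral_const_mul]
  refine intervalIntegral.integral_mono_on hax (intervalIntegrable_comp_sub_mul hT₂ h0₂ x _ _)
    ((intervalIntegrable_comp_sub_mul hT₁ h0₁ x _ _).const_mul _) fun y hy => ?_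
  calc T₂ (x - y) * T₂ y ≤ (C * T₁ (x - y)) * (C * T₁ y) :=
        mul_le_mul (hcomp _ (by linarith [hy.2])) (hcomp _ (by linarith [hy.1])) (h0₂ _)
          (mul_nonneg hC (h0₁ _))
    _ = C ^ 2 * (T₁ (x - y) * T₁ y) := by ring

theorem integral_comp_sub_mul_div_le_of_comparison (hT₁ : Antitone T₁) (h₁pos : ∀ x, 0 < T₁ x)
    (hT₂ : Antitone T₂) (h₂pos : ∀ x, 0 < T₂ x) {C x₀ a x : ℝ} (hC : 0 ≤ C)
    (hcomp : ∀ y ≥ x₀, T₂ y ≤ C * T₁ y ∧ T₁ y ≤ C * T₂ y) (hax₀ : x₀ ≤ a) (ha : 0 ≤ a)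
    (hx : 2 * a ≤ x) :
    (∫ y in (0 : ℝ)..x, T₂ (x - y) * T₂ y) / T₂ x ≤
      2 * (T₂ (x - a) / T₂ x) * (∫ y in (0 : ℝ)..a, T₂ y) +
        C ^ 3 * ((∫ y in (0 : ℝ)..x, T₁ (x - y) * T₁ y) / T₁ x - 2 * ∫ y in (0 : ℝ)..a, T₁ y) := by
  have h0₁ : ∀ x, 0 ≤ T₁ x := fun x => (h₁pos x).le
  have h0₂ : ∀ x, 0 ≤ T₂ x := fun x => (h₂pos x).le
  have hmiddle := integral_comp_sub_mul_le_sq_mul hT₁ h0₁ hT₂ h0₂ hC (fun y hy => (hcomp y hy).1)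
    hax₀ (by linarith)
  have hhead₂ := integral_comp_sub_mul_le_mul_integral hT₂ h0₂ ha x
  have hT₁x : T₁ x ≤ C * T₂ x := (hcomp x (by linarith)).2
  set B := (∫ y in (0 : ℝ)..x, T₁ (x - y) * T₁ y) / T₁ x - 2 * ∫ y in (0 : ℝ)..a, T₁ y
  have hB : 0 ≤ B := sub_nonneg.2 (two_mul_integral_le_integral_comp_sub_mul_div hT₁ h₁pos ha hx)
  have hmiddle₁ := integral_comp_sub_mul_middle_le hT₁ h₁pos ha x
  have hbound : ∫ y in (0 : ℝ)..x, T₂ (x - y) * T₂ y ≤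
      2 * T₂ (x - a) * (∫ y in (0 : ℝ)..a, T₂ y) + C ^ 3 * B * T₂ x := by
    rw [integral_comp_sub_mul_eq_two_mul_add hT₂ h0₂ a x]
    have hmiddle₂ : C ^ 2 * ∫ y in a..(x - a), T₁ (x - y) * T₁ y ≤ C ^ 3 * B * T₂ x :=
      calc C ^ 2 * ∫ y in a..(x - a), T₁ (x - y) * T₁ y ≤ C ^ 2 * (B * (C * T₂ x)) := by
            gcongr
            exact hmiddle₁.trans (by gcongr)
        _ = C ^ 3 * B * T₂ x := by ring
    linarith
  rw [div_le_iff₀ (h₂pos x)]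
  linear_combination
    hbound - 2 * (∫ y in (0 : ℝ)..a, T₂ y) * div_mul_cancel₀ (T₂ (x - a)) (h₂pos x).ne'

end Comparison

theorem LongTailedFun.isBigO_comp_sub {T : ℝ → ℝ} (hT : LongTailedFun T) {a : ℝ} (ha : 0 < a) :
    (fun x => T (x - a)) =O[atTop] T :=
  isBigO_of_div_tendsto_nhds (.of_forall fun x hx => absurd hx (hT.1 x).ne') 1 (hT.2 a ha)

theorem LongTailedFun.isBigO_comp_add {T : ℝ → ℝ} (hT : LongTailedFun T) {a : ℝ} (ha : 0 < a) :
    T =O[atTop] fun x => T (x + a) := by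
  simpa only [Function.comp_def, id, add_sub_cancel_right] using
    (hT.isBigO_comp_sub ha).comp_tendsto (tendsto_atTop_add_const_right _ a tendsto_id)

theorem integrableOn_Ioi_of_isBigO {T₁ T₂ : ℝ → ℝ} (hT₂ : Antitone T₂)
    (h₁ : IntegrableOn T₁ (Ioi 0)) (h₂₁ : T₂ =O[atTop] T₁) : IntegrableOn T₂ (Ioi 0) :=
  ((hT₂.locallyIntegrable.locallyIntegrableOn (Ici 0)).integrableOn_of_isBigO_atTop h₂₁
    ⟨Ioi 0, Ioi_mem_atTop 0, h₁⟩).mono_set Ioi_subset_Ici_self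

theorem StrongSubexpFun.of_isBigO {T₁ T₂ : ℝ → ℝ} (h₁ : StrongSubexpFun T₁)
    (h₂ : LongTailedFun T₂) (hT₁ : Antitone T₁) (hT₂ : Antitone T₂) (h₁₂ : T₁ =O[atTop] T₂)
    (h₂₁ : T₂ =O[atTop] T₁) : StrongSubexpFun T₂ := by
  obtain ⟨h₁pos, h₁int, h₁conv⟩ := h₁
  obtain ⟨h₂pos, h₂long⟩ := h₂
  have h₂int := integrableOn_Ioi_of_isBigO hT₂ h₁int h₂₁
  obtain ⟨C, x₀, hC, hcomp⟩ :=
    exists_le_mul_and_le_mul_of_isBigO (fun x => (h₁pos x).le) (fun x => (h₂pos x).le) h₁₂ h₂₁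
  have hJ₁ : Tendsto (fun a => ∫ y in (0 : ℝ)..a, T₁ y) atTop (nhds (tailMean T₁)) :=
    intervalIntegral_tendsto_integral_Ioi 0 h₁int tendsto_id
  have hJ₂ : Tendsto (fun a => ∫ y in (0 : ℝ)..a, T₂ y) atTop (nhds (tailMean T₂)) :=
    intervalIntegral_tendsto_integral_Ioi 0 h₂int tendsto_id
  refine ⟨h₂pos, h₂int, tendsto_of_eventually_squeezed (hJ₂.const_mul 2)
    (up := fun a => 2 * (∫ y in (0 : ℝ)..a, T₂ y) +
      C ^ 3 * (2 * tailMean T₁ - 2 * ∫ y in (0 : ℝ)..a, T₁ y))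
    (g := fun a x => 2 * (T₂ (x - a) / T₂ x) * (∫ y in (0 : ℝ)..a, T₂ y) +
      C ^ 3 * ((∫ y in (0 : ℝ)..x, T₁ (x - y) * T₁ y) / T₁ x - 2 * ∫ y in (0 : ℝ)..a, T₁ y))
    ?_ ?_ ?_⟩
  · simpa using (hJ₂.const_mul 2).add
      (((hJ₁.const_mul 2).const_sub (2 * tailMean T₁)).const_mul (C ^ 3))
  · filter_upwards [eventually_gt_atTop 0] with a ha
    simpa using (((h₂long a ha).const_mul 2).mul_const _).add
      ((h₁conv.sub_const (2 * ∫ y in (0 : ℝ)..a, T₁ y)).const_mul (C ^ 3))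
  · filter_upwards [eventually_ge_atTop x₀, eventually_ge_atTop 0] with a hax₀ ha
    filter_upwards [eventually_ge_atTop (2 * a)] with x hx
    exact ⟨two_mul_integral_le_integral_comp_sub_mul_div hT₂ h₂pos ha hx,
      integral_comp_sub_mul_div_le_of_comparison hT₁ h₁pos hT₂ h₂pos hC hcomp hax₀ ha hx⟩

section TailOfYA

variable {d : ℕ} {Ω : Type*} {X : Ω → (Fin d → ℝ)} {A : Set (Fin d → ℝ)}

theorem mem_smul_of_lt_YA (hinc : IncreasingSet A) {ω : Ω} (hXpos : ∀ i, 0 ≤ X ω i) {x : ℝ}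
    (hx : 0 < x) (h : x < YA X A ω) : X ω ∈ x • A := by
  have hne : {u : ℝ | 0 < u ∧ X ω ∈ u • A}.Nonempty := by
    by_contra hempty
    rw [not_nonempty_iff_eq_empty] at hempty
    rw [YA, hempty, Real.sSup_empty] at h
    linarith
  obtain ⟨u, ⟨hu, b, hbA, hb⟩, hxu⟩ := exists_lt_of_lt_csSup hne h
  rw [← show u • b = X ω from hb] at hXpos ⊢
  have hb : ∀ i, 0 ≤ b i := fun i => nonneg_of_mul_nonneg_right (by simpa using hXpos i) hu
  refine ⟨(u / x) • b, ?_, show x • (u / x) • b = u • b by rw [smul_smul, mul_div_cancel₀ _ hx.ne']⟩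
  have hux : 0 ≤ u / x - 1 := sub_nonneg.2 ((one_le_div hx).2 hxu.le)
  convert hinc b hbA ((u / x - 1) • b) fun i => mul_nonneg hux (hb i) using 1
  rw [sub_smul, one_smul, add_sub_cancel]

theorem lt_YA_of_mem_smul (hcl : (0 : Fin d → ℝ) ∉ closure A) {ω : Ω} {x y : ℝ} (hy : y < x)
    (hx : 0 < x) (h : X ω ∈ x • A) : y < YA X A ω := by
  obtain ⟨δ, hδ, hsep⟩ : ∃ δ > 0, ∀ b ∈ A, δ ≤ dist 0 b := by
    simpa [Metric.mem_closure_iff] using hcl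
  have hbdd : BddAbove {u : ℝ | 0 < u ∧ X ω ∈ u • A} := by
    refine ⟨‖X ω‖ / δ, fun u ⟨hu, b, hbA, hb⟩ => ?_⟩
    have hnorm : ‖X ω‖ = u * ‖b‖ := by rw [← hb, norm_smul, Real.norm_of_nonneg hu.le]
    have hδb : δ ≤ ‖b‖ := by simpa using hsep b hbA
    rw [le_div_iff₀ hδ, hnorm]
    exact mul_le_mul_of_nonneg_left hδb hu.le
  exact hy.trans_le (le_csSup hbdd ⟨hx, h⟩)

variable [MeasurableSpace Ω] (P : Measure Ω) [IsFiniteMeasure P]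

theorem tailYA_antitone : Antitone (tailYA P X A) := fun _ _ hxy =>
  ENNReal.toReal_mono (measure_ne_top P _) (measure_mono fun _ hω => hxy.trans_lt hω)

theorem tailYA_isBigO_probIn (hinc : IncreasingSet A) (hXpos : ∀ ω i, 0 ≤ X ω i) :
    tailYA P X A =O[atTop] probIn P X A := by
  refine IsBigO.of_bound' ?_
  filter_upwards [eventually_gt_atTop 0] with x hx
  rw [tailYA, probIn, Real.norm_of_nonneg ENNReal.toReal_nonneg,
    Real.norm_of_nonneg ENNReal.toReal_nonneg]
  exact ENNReal.toReal_mono (measure_ne_top P _)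
    (measure_mono fun ω hω => mem_smul_of_lt_YA hinc (hXpos ω) hx hω)

theorem probIn_isBigO_tailYA_comp_sub (hcl : (0 : Fin d → ℝ) ∉ closure A) {a : ℝ} (ha : 0 < a) :
    probIn P X A =O[atTop] fun x => tailYA P X A (x - a) := by
  refine IsBigO.of_bound' ?_
  filter_upwards [eventually_gt_atTop 0] with x hx
  rw [tailYA, probIn, Real.norm_of_nonneg ENNReal.toReal_nonneg,
    Real.norm_of_nonneg ENNReal.toReal_nonneg]
  exact ENNReal.toReal_mono (measure_ne_top P _)
    (measure_mono fun ω hω => lt_YA_of_mem_smul hcl (sub_lt_self x ha) hx hω)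

end TailOfYA

theorem statement2_general {d : ℕ} (A : Set (Fin d → ℝ)) (hA : MemR A)
    {Ω : Type*} [MeasurableSpace Ω] (P : Measure Ω) [IsProbabilityMeasure P]
    (X₁ X₂ : Ω → (Fin d → ℝ))
    (hX₁pos : ∀ ω i, 0 ≤ X₁ ω i) (hX₂pos : ∀ ω i, 0 ≤ X₂ ω i)
    (h₁ : StrongSubexpFun (tailYA P X₁ A))
    (h₂ : LongTailedFun (tailYA P X₂ A))
    (hO₁ : (fun x => probIn P X₁ A x) =O[atTop] fun x => probIn P X₂ A x)
    (hO₂ : (fun x => probIn P X₂ A x) =O[atTop] fun x => probIn P X₁ A x) :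
    StrongSubexpFun (tailYA P X₂ A) := by
  obtain ⟨-, hinc, -, hcl⟩ := hA
  have h₁₂ : tailYA P X₁ A =O[atTop] tailYA P X₂ A :=
    (tailYA_isBigO_probIn P hinc hX₁pos).trans <| hO₁.trans <|
      (probIn_isBigO_tailYA_comp_sub P hcl one_pos).trans (h₂.isBigO_comp_sub one_pos)
  have hshift : (fun x => tailYA P X₂ A (x + 1)) =O[atTop] fun x => tailYA P X₁ A (x + 1 - 1) :=
    ((tailYA_isBigO_probIn P hinc hX₂pos).trans <| hO₂.trans <|
      probIn_isBigO_tailYA_comp_sub P hcl one_pos).comp_tendsto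
        (tendsto_atTop_add_const_right _ 1 tendsto_id)
  simp only [add_sub_cancel_right] at hshift
  exact h₁.of_isBigO h₂ (tailYA_antitone P) (tailYA_antitone P) h₁₂
    ((h₂.isBigO_comp_add one_pos).trans hshift)

/-- Closure of `𝒮*_A` under weak tail-equivalence within `𝓛_A`:
if `F₁ ∈ 𝒮*_A`, `F₂ ∈ 𝓛_A` and `P[X⁽¹⁾ ∈ xA] ≍ P[X⁽²⁾ ∈ xA]`, then `F₂ ∈ 𝒮*_A`. -/
theorem statement2 {d : ℕ} (A : Set (Fin d → ℝ)) (hA : MemR A)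
    {Ω : Type*} [MeasurableSpace Ω] (P : Measure Ω) [IsProbabilityMeasure P]
    (X₁ X₂ : Ω → (Fin d → ℝ)) (hX₁ : Measurable X₁) (hX₂ : Measurable X₂)
    (hX₁pos : ∀ ω i, 0 ≤ X₁ ω i) (hX₂pos : ∀ ω i, 0 ≤ X₂ ω i)
    (h₁ : StrongSubexpFun (tailYA P X₁ A))
    (h₂ : LongTailedFun (tailYA P X₂ A))
    (hO₁ : (fun x => probIn P X₁ A x) =O[atTop] fun x => probIn P X₂ A x)
    (hO₂ : (fun x => probIn P X₂ A x) =O[atTop] fun x => probIn P X₁ A x) :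
    StrongSubexpFun (tailYA P X₂ A) :=
  statement2_general A hA P X₁ X₂ hX₁pos hX₂pos h₁ h₂ hO₁ hO₂
end

section
/- Let A ∈ 𝓡 be fixed and let X⁽¹⁾, X⁽²⁾ be random vectors in [0,∞)^d with distributions F₁, F₂. If F₁ ∈ 𝒮*_A and lim_{x→∞} P[X⁽¹⁾ ∈ xA] / P[X⁽²⁾ ∈ xA] = c for some c ∈ (0,∞), then F₂ ∈ 𝒮*_A. -/
open MeasureTheory ProbabilityTheory Filter Set Pointwise Asymptotics

section OneDim
variable {T : ℝ → ℝ}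

lemma conv_intInt (hpos : ∀ x, 0 < T x) (hanti : Antitone T) (x a b : ℝ) :
    IntervalIntegrable (fun y => T (x - y) * T y) volume a b := by
  have hmeas : Measurable fun y => T (x - y) * T y :=
    (hanti.measurable.comp (measurable_const.sub measurable_id)).mul hanti.measurable
  apply IntervalIntegrable.mono_fun' (g := fun _ => T (x - max a b) * T (min a b))
    (intervalIntegrable_const) hmeas.aestronglyMeasurable
  rw [Filter.EventuallyLE, ae_restrict_iff' measurableSet_uIoc]
  refine ae_of_all _ fun y hy => ?_
  rcases hy with ⟨h1, h2⟩
  have hy1 : min a b < y := h1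
  have hy2 : y ≤ max a b := h2
  have e1 : T (x - y) ≤ T (x - max a b) := hanti (by linarith)
  have e2 : T y ≤ T (min a b) := hanti hy1.le
  have := mul_le_mul e1 e2 (hpos y).le (hpos _).le
  rwa [Real.norm_eq_abs, abs_of_nonneg (mul_nonneg (hpos _).le (hpos _).le)]

lemma conv_symm (hpos : ∀ x, 0 < T x) (hanti : Antitone T) {x : ℝ} (hx : 0 ≤ x) :
    (∫ y in (0:ℝ)..x, T (x - y) * T y) = 2 * ∫ y in (0:ℝ)..x/2, T (x - y) * T y := by
  have h1 : (∫ y in (0:ℝ)..x, T (x - y) * T y)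
      = (∫ y in (0:ℝ)..x/2, T (x - y) * T y) + ∫ y in (x/2)..x, T (x - y) * T y :=
    (intervalIntegral.integral_add_adjacent_intervals (conv_intInt hpos hanti x 0 (x/2))
      (conv_intInt hpos hanti x (x/2) x)).symm
  have h2 : (∫ y in (x/2)..x, T (x - y) * T y) = ∫ y in (0:ℝ)..x/2, T (x - y) * T y := by
    have key := intervalIntegral.integral_comp_sub_left (a := x/2) (b := x)
      (fun y => T y * T (x - y)) x
    simp only [sub_sub_cancel] at key
    have e1 : x - x = 0 := by ring
    have e2 : x - x/2 = x/2 := by ring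
    rw [e1, e2] at key
    calc (∫ y in (x/2)..x, T (x - y) * T y) = ∫ y in (x/2)..x, T (x-y) * T (y) := rfl
    _ = ∫ y in (0:ℝ)..x/2, T y * T (x - y) := key
    _ = ∫ y in (0:ℝ)..x/2, T (x - y) * T y := by simp only [mul_comm]
  rw [h1, h2]; ring

end OneDim

section OneDim2
variable {T : ℝ → ℝ}

noncomputable def halfConv (T : ℝ → ℝ) (x : ℝ) : ℝ :=
  (∫ y in (0:ℝ)..(x/2), T (x - y) * T y) / T x

lemma half_conv_tendsto (h : StrongSubexpFun T) (hanti : Antitone T) :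
    Tendsto (halfConv T) atTop (nhds (tailMean T)) := by
  have h2 := h.2.2.const_mul (1/2 : ℝ)
  have hval : (1/2 : ℝ) * (2 * tailMean T) = tailMean T := by ring
  rw [hval] at h2
  refine h2.congr' ?_
  filter_upwards [eventually_ge_atTop (0:ℝ)] with x hx
  unfold halfConv
  rw [conv_symm h.1 hanti hx]
  field_simp

lemma int_head_tendsto (hint : IntegrableOn T (Ioi 0) volume) :
    Tendsto (fun M => ∫ y in (0:ℝ)..M, T y) atTop (nhds (tailMean T)) :=
  intervalIntegral_tendsto_integral_Ioi 0 hint tendsto_id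

lemma int_head_le (hpos : ∀ x, 0 < T x) (hint : IntegrableOn T (Ioi 0) volume)
    {M : ℝ} (hM : 0 ≤ M) : (∫ y in (0:ℝ)..M, T y) ≤ tailMean T := by
  rw [intervalIntegral.integral_of_le hM]
  refine setIntegral_mono_set hint ?_ ?_
  · exact ae_of_all _ fun y => (hpos y).le
  · exact ae_of_all _ fun y hy => hy.1

lemma tailMean_nonneg (hpos : ∀ x, 0 < T x) : 0 ≤ tailMean T :=
  setIntegral_nonneg measurableSet_Ioi fun y _ => (hpos y).le

lemma longtailed (h : StrongSubexpFun T) (hanti : Antitone T) :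
    ∀ a > (0:ℝ), Tendsto (fun x => T (x - a) / T x) atTop (nhds 1) := by
  intro a ha
  obtain ⟨hpos, hint, -⟩ := id h
  have hμ : Tendsto (fun x : ℝ => ∫ y in (0:ℝ)..(x/2), T y) atTop (nhds (tailMean T)) :=
    (int_head_tendsto hint).comp (tendsto_id.atTop_div_const (by norm_num))
  set g : ℝ → ℝ := fun x => halfConv T x - ∫ y in (0:ℝ)..(x/2), T y with hg_def
  have hg : Tendsto g atTop (nhds 0) := by
    have := (half_conv_tendsto h hanti).sub hμ
    simpa using this
  set Ca : ℝ := ∫ y in a..(2*a), T y with hCa_def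
  have hCa : 0 < Ca := by
    have hle : a ≤ 2*a := by linarith
    have : (2*a - a) * T (2*a) ≤ Ca := by
      have := intervalIntegral.integral_mono_on (μ := volume) (f := fun _ => T (2*a)) (g := T) hle
        intervalIntegrable_const (hanti.intervalIntegrable)
        (fun y hy => hanti hy.2)
      simpa [smul_eq_mul] using this
    have : 0 < (2*a - a) * T (2*a) := by
      have := hpos (2*a); nlinarith
    linarith [le_trans (le_of_lt this) ‹(2*a - a) * T (2*a) ≤ Ca›]
  have key : ∀ x : ℝ, 4*a ≤ x → (T (x - a) / T x - 1) * Ca ≤ g x := by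
    intro x hx
    have hTx := hpos x
    have hord1 : (0:ℝ) ≤ a := ha.le
    have hord2 : a ≤ 2*a := by linarith
    have hord3 : 2*a ≤ x/2 := by linarith
    -- rewrite g x as an integral of nonneg integrand
    have hII : ∀ u v : ℝ, IntervalIntegrable (fun y => T (x - y) * T y / T x - T y) volume u v :=
      fun u v => ((conv_intInt hpos hanti x u v).div_const _).sub hanti.intervalIntegrable
    have hgx : g x = ∫ y in (0:ℝ)..(x/2), (T (x - y) * T y / T x - T y) := by
      rw [hg_def]
      simp only [halfConv]
      rw [← intervalIntegral.integral_div]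
      rw [← intervalIntegral.integral_sub ((conv_intInt hpos hanti x 0 (x/2)).div_const _)
        hanti.intervalIntegrable]
    have hnn : ∀ u v : ℝ, 0 ≤ u → u ≤ v → 0 ≤ ∫ y in u..v, (T (x - y) * T y / T x - T y) := by
      intro u v hu huv
      refine intervalIntegral.integral_nonneg huv fun y hy => ?_
      have h1 : T x ≤ T (x - y) := hanti (by linarith [hy.1, hu])
      have h2 : T y ≤ T (x - y) * T y / T x := by
        rw [le_div_iff₀ hTx]
        have := mul_le_mul_of_nonneg_right h1 (hpos y).le
        linarith [this]
      linarith
    have hsplit : (∫ y in (0:ℝ)..(x/2), (T (x - y) * T y / T x - T y))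
        = (∫ y in (0:ℝ)..a, (T (x - y) * T y / T x - T y))
          + (∫ y in a..(2*a), (T (x - y) * T y / T x - T y))
          + ∫ y in (2*a)..(x/2), (T (x - y) * T y / T x - T y) := by
      rw [intervalIntegral.integral_add_adjacent_intervals (hII 0 a) (hII a (2*a)),
        intervalIntegral.integral_add_adjacent_intervals (hII 0 (2*a)) (hII (2*a) (x/2))]
    have hmid : (T (x - a) / T x - 1) * Ca ≤ ∫ y in a..(2*a), (T (x - y) * T y / T x - T y) := by
      rw [hCa_def, ← intervalIntegral.integral_const_mul]
      refine intervalIntegral.integral_mono_on hord2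
        (hanti.intervalIntegrable.const_mul _) (hII a (2*a)) fun y hy => ?_
      have h1 : T (x - a) ≤ T (x - y) := hanti (by linarith [hy.1])
      have hTy := hpos y
      rw [sub_mul, one_mul, div_mul_eq_mul_div, sub_le_sub_iff_right, div_le_div_iff₀ hTx hTx]
      nlinarith [mul_le_mul_of_nonneg_right (mul_le_mul_of_nonneg_right h1 hTy.le) hTx.le]
    have := hnn 0 a le_rfl hord1
    have := hnn (2*a) (x/2) (by linarith) hord3
    rw [hgx, hsplit]
    linarith [hmid]
  -- squeeze
  have hub : Tendsto (fun x => 1 + g x / Ca) atTop (nhds 1) := by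
    have := (hg.div_const Ca).const_add (1:ℝ)
    simpa using this
  refine tendsto_of_tendsto_of_tendsto_of_le_of_le' tendsto_const_nhds hub ?_ ?_
  · filter_upwards [eventually_ge_atTop (0:ℝ)] with x hx
    rw [le_div_iff₀ (hpos x), one_mul]
    exact hanti (by linarith)
  · filter_upwards [eventually_ge_atTop (4*a)] with x hx
    have := key x hx
    rw [← sub_le_iff_le_add']
    calc T (x - a) / T x - 1 = (T (x - a) / T x - 1) * Ca / Ca := by field_simp
    _ ≤ g x / Ca := by gcongr
end OneDim2

section Main1D
variable {T T₁ T₂ : ℝ → ℝ}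

lemma head_lower (hpos : ∀ x, 0 < T x) (hanti : Antitone T) {M : ℝ} (hM : 0 ≤ M) (x : ℝ) :
    (∫ y in (0:ℝ)..M, T y) ≤ (∫ y in (0:ℝ)..M, T (x - y) * T y) / T x := by
  rw [le_div_iff₀ (hpos x)]
  have he : (∫ y in (0:ℝ)..M, T y) * T x = ∫ y in (0:ℝ)..M, T y * T x :=
    (intervalIntegral.integral_mul_const _ _).symm
  rw [he]
  refine intervalIntegral.integral_mono_on hM (hanti.intervalIntegrable.mul_const _)
    (conv_intInt hpos hanti x 0 M) fun y hy => ?_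
  have h1 : T x ≤ T (x - y) := hanti (by linarith [hy.1])
  nlinarith [hpos y]

lemma head_upper (hpos : ∀ x, 0 < T x) (hanti : Antitone T) {M : ℝ} (hM : 0 ≤ M) (x : ℝ) :
    (∫ y in (0:ℝ)..M, T (x - y) * T y) ≤ T (x - M) * ∫ y in (0:ℝ)..M, T y := by
  rw [← intervalIntegral.integral_const_mul]
  refine intervalIntegral.integral_mono_on hM (conv_intInt hpos hanti x 0 M)
    ((hanti.intervalIntegrable).const_mul _) fun y hy => ?_
  have h1 : T (x - y) ≤ T (x - M) := hanti (by linarith [hy.2])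
  nlinarith [hpos y]

set_option maxHeartbeats 2000000 in
lemma strongSubexp_equiv (h₁ : StrongSubexpFun T₁) (hanti₁ : Antitone T₁)
    (hpos₂ : ∀ x, 0 < T₂ x) (hanti₂ : Antitone T₂)
    (hint₂ : IntegrableOn T₂ (Ioi 0) volume)
    {c : ℝ} (hc : 0 < c) (hlim : Tendsto (fun x => T₁ x / T₂ x) atTop (nhds c)) :
    StrongSubexpFun T₂ := by
  obtain ⟨hpos₁, hint₁, -⟩ := id h₁
  refine ⟨hpos₂, hint₂, ?_⟩
  suffices H : Tendsto (halfConv T₂) atTop (nhds (tailMean T₂)) by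
    have h2 := H.const_mul (2:ℝ)
    refine h2.congr' ?_
    filter_upwards [eventually_ge_atTop (0:ℝ)] with x hx
    show 2 * halfConv T₂ x = _
    unfold halfConv
    rw [conv_symm hpos₂ hanti₂ hx, mul_div_assoc]
  -- long-tailedness of T₂
  have hlt₂ : ∀ a > (0:ℝ), Tendsto (fun x => T₂ (x - a) / T₂ x) atTop (nhds 1) := by
    intro a ha
    have hinv : Tendsto (fun x => T₂ x / T₁ x) atTop (nhds c⁻¹) := by
      have h' := hlim.inv₀ (ne_of_gt hc)
      refine h'.congr fun x => ?_
      rw [← one_div, one_div_div]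
    have hsub : Tendsto (fun x : ℝ => x - a) atTop atTop :=
      tendsto_atTop_add_const_right atTop (-a) tendsto_id
    have hcomp := hinv.comp hsub
    have hlt₁ := longtailed h₁ hanti₁ a ha
    have hmul := (hcomp.mul hlt₁).mul hlim
    have hval : c⁻¹ * 1 * c = 1 := by field_simp
    rw [hval] at hmul
    refine hmul.congr fun x => ?_
    simp only [Function.comp_apply]
    have e1 := (hpos₁ (x - a)).ne'
    have e2 := (hpos₁ x).ne'
    have e3 := (hpos₂ x).ne'
    field_simp
  -- comparison constants
  obtain ⟨x₁, hx₁⟩ : ∃ N : ℝ, ∀ z ≥ N, c/2 * T₂ z ≤ T₁ z ∧ T₁ z ≤ 2*c * T₂ z := by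
    have hev : ∀ᶠ z in atTop, dist (T₁ z / T₂ z) c < c/2 :=
      hlim.eventually (Metric.ball_mem_nhds c (half_pos hc))
    rw [eventually_atTop] at hev
    obtain ⟨N, hN⟩ := hev
    refine ⟨N, fun z hz => ?_⟩
    have h := hN z hz
    rw [Real.dist_eq, abs_lt] at h
    have hT₂ := hpos₂ z
    have l1 : c/2 < T₁ z / T₂ z := by linarith [h.1]
    have l2 : T₁ z / T₂ z < 2*c := by linarith [h.2]
    exact ⟨le_of_lt ((lt_div_iff₀ hT₂).1 l1), le_of_lt ((div_lt_iff₀ hT₂).1 l2)⟩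
  have H₁ := half_conv_tendsto h₁ hanti₁
  rw [Metric.tendsto_nhds]
  intro ε hε
  have hμ₂0 : 0 ≤ tailMean T₂ := tailMean_nonneg hpos₂
  set ε' : ℝ := ε / (4 * (tailMean T₂ + 1)) with hε'_def
  have hε' : 0 < ε' := by positivity
  set δ : ℝ := ε * c / 64 with hδ_def
  have hδ : 0 < δ := by positivity
  -- choose M
  have hM₁ := (int_head_tendsto hint₁).eventually (Metric.ball_mem_nhds (tailMean T₁) hδ)
  have hM₂ := (int_head_tendsto hint₂).eventually
    (Metric.ball_mem_nhds (tailMean T₂) (show (0:ℝ) < ε/4 by linarith))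
  obtain ⟨M, ⟨hM1', hM2'⟩, hM3⟩ := ((hM₁.and hM₂).and (eventually_ge_atTop (max x₁ 1))).exists
  rw [Real.dist_eq, abs_lt] at hM1' hM2'
  have hMx₁ : x₁ ≤ M := le_trans (le_max_left _ _) hM3
  have hM1 : (1:ℝ) ≤ M := le_trans (le_max_right _ _) hM3
  have hM0 : (0:ℝ) < M := by linarith
  have hIT₁low : tailMean T₁ - δ ≤ ∫ y in (0:ℝ)..M, T₁ y := by linarith [hM1'.1]
  have hIT₂low : tailMean T₂ - ε/4 ≤ ∫ y in (0:ℝ)..M, T₂ y := by linarith [hM2'.1]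
  have hIT₂up : (∫ y in (0:ℝ)..M, T₂ y) ≤ tailMean T₂ := int_head_le hpos₂ hint₂ hM0.le
  have hIT₁up : (∫ y in (0:ℝ)..M, T₁ y) ≤ tailMean T₁ := int_head_le hpos₁ hint₁ hM0.le
  have hIT₂0 : 0 ≤ ∫ y in (0:ℝ)..M, T₂ y :=
    intervalIntegral.integral_nonneg hM0.le fun y _ => (hpos₂ y).le
  -- eventual bounds in x
  filter_upwards [H₁.eventually (Metric.ball_mem_nhds (tailMean T₁) hδ),
    (hlt₂ M hM0).eventually (Metric.ball_mem_nhds 1 hε'),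
    eventually_ge_atTop (2*M)] with x hH₁x hLTx hx2M
  rw [Real.dist_eq, abs_lt] at hH₁x hLTx
  have hxhalf : M ≤ x/2 := by linarith
  have hx0 : (0:ℝ) ≤ x := by linarith
  have hTx₁ := hpos₁ x
  have hTx₂ := hpos₂ x
  set A₂ : ℝ := ∫ y in (0:ℝ)..M, T₂ (x - y) * T₂ y with hA₂def
  set B₂ : ℝ := ∫ y in M..(x/2), T₂ (x - y) * T₂ y with hB₂def
  set A₁ : ℝ := ∫ y in (0:ℝ)..M, T₁ (x - y) * T₁ y with hA₁def
  set B₁ : ℝ := ∫ y in M..(x/2), T₁ (x - y) * T₁ y with hB₁def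
  have hsplit₂ : halfConv T₂ x = A₂ / T₂ x + B₂ / T₂ x := by
    unfold halfConv
    rw [← intervalIntegral.integral_add_adjacent_intervals (conv_intInt hpos₂ hanti₂ x 0 M)
      (conv_intInt hpos₂ hanti₂ x M (x/2))]
    rw [add_div]
  have hsplit₁ : halfConv T₁ x = A₁ / T₁ x + B₁ / T₁ x := by
    unfold halfConv
    rw [← intervalIntegral.integral_add_adjacent_intervals (conv_intInt hpos₁ hanti₁ x 0 M)
      (conv_intInt hpos₁ hanti₁ x M (x/2))]
    rw [add_div]
  -- lower bound
  have lower1 : (∫ y in (0:ℝ)..M, T₂ y) ≤ A₂ / T₂ x := head_lower hpos₂ hanti₂ hM0.le x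
  have hB₂0 : 0 ≤ B₂ := intervalIntegral.integral_nonneg hxhalf
    fun y _ => mul_nonneg (hpos₂ _).le (hpos₂ _).le
  have hB₁0 : 0 ≤ B₁ := intervalIntegral.integral_nonneg hxhalf
    fun y _ => mul_nonneg (hpos₁ _).le (hpos₁ _).le
  -- upper bound for A₂/T₂x
  have upper1 : A₂ / T₂ x ≤ (1 + ε') * ∫ y in (0:ℝ)..M, T₂ y := by
    have s1 : A₂ ≤ T₂ (x - M) * ∫ y in (0:ℝ)..M, T₂ y := head_upper hpos₂ hanti₂ hM0.le x
    have s2 : A₂ / T₂ x ≤ (T₂ (x - M) / T₂ x) * ∫ y in (0:ℝ)..M, T₂ y := by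
      rw [div_mul_eq_mul_div]
      gcongr
    have s3 : T₂ (x - M) / T₂ x ≤ 1 + ε' := by linarith [hLTx.2]
    calc A₂ / T₂ x ≤ (T₂ (x - M) / T₂ x) * ∫ y in (0:ℝ)..M, T₂ y := s2
    _ ≤ (1 + ε') * ∫ y in (0:ℝ)..M, T₂ y := mul_le_mul_of_nonneg_right s3 hIT₂0
  -- upper bound for B₂/T₂x
  have upperB : B₂ / T₂ x ≤ 8/c * (2*δ) := by
    have hb : ∀ y ∈ Icc M (x/2), T₂ (x - y) * T₂ y ≤ 4/c^2 * (T₁ (x - y) * T₁ y) := by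
      intro y hy
      have hz1 : x₁ ≤ x - y := by linarith [hy.2]
      have hz2 : x₁ ≤ y := le_trans hMx₁ hy.1
      have b1 : T₂ (x - y) ≤ 2/c * T₁ (x - y) := by
        have := (hx₁ _ hz1).1
        rw [div_mul_eq_mul_div, le_div_iff₀ hc]
        nlinarith
      have b2 : T₂ y ≤ 2/c * T₁ y := by
        have := (hx₁ _ hz2).1
        rw [div_mul_eq_mul_div, le_div_iff₀ hc]
        nlinarith
      calc T₂ (x - y) * T₂ y ≤ (2/c * T₁ (x - y)) * (2/c * T₁ y) :=
        mul_le_mul b1 b2 (hpos₂ y).le (mul_nonneg (by positivity) (hpos₁ (x-y)).le)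
      _ = 4/c^2 * (T₁ (x - y) * T₁ y) := by field_simp; ring
    have s1 : B₂ ≤ 4/c^2 * B₁ := by
      rw [hB₂def, hB₁def, ← intervalIntegral.integral_const_mul]
      exact intervalIntegral.integral_mono_on hxhalf (conv_intInt hpos₂ hanti₂ x M (x/2))
        ((conv_intInt hpos₁ hanti₁ x M (x/2)).const_mul _) hb
    have s2 : B₁ / T₁ x ≤ 2*δ := by
      have a1 : (∫ y in (0:ℝ)..M, T₁ y) ≤ A₁ / T₁ x := head_lower hpos₁ hanti₁ hM0.le x
      have a2 : halfConv T₁ x < tailMean T₁ + δ := by linarith [hH₁x.2]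
      have a3 : B₁ / T₁ x = halfConv T₁ x - A₁ / T₁ x := by rw [hsplit₁]; ring
      rw [a3]
      linarith
    have s3 : T₁ x ≤ 2*c * T₂ x := (hx₁ x (by linarith)).2
    -- B₂/T₂x ≤ (4/c²)B₁/T₂x ≤ (8/c)(B₁/T₁x) ≤ 8/c*2δ
    have s4 : B₂ / T₂ x ≤ (4/c^2 * B₁) / T₂ x := by gcongr
    have s5 : (4/c^2 * B₁) / T₂ x ≤ 8/c * (B₁ / T₁ x) := by
      have hr0 : 0 ≤ B₁ / T₁ x := div_nonneg hB₁0 hTx₁.le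
      have hrr : B₁ = B₁ / T₁ x * T₁ x := (div_mul_cancel₀ _ hTx₁.ne').symm
      rw [div_le_iff₀ hTx₂]
      have h4 : (0:ℝ) ≤ 4/c^2 := by positivity
      have hkey := mul_le_mul_of_nonneg_left s3 (mul_nonneg h4 hr0)
      calc 4/c^2 * B₁ = 4/c^2 * (B₁ / T₁ x) * T₁ x := by field_simp [hTx₁.ne']
        _ ≤ 4/c^2 * (B₁ / T₁ x) * (2*c * T₂ x) := by
            calc 4/c^2 * (B₁ / T₁ x) * T₁ x = 4/c^2 * (B₁ / T₁ x) * T₁ x := rfl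
              _ ≤ 4/c^2 * (B₁ / T₁ x) * (2*c * T₂ x) := hkey
        _ = 8/c * (B₁ / T₁ x) * T₂ x := by field_simp [hTx₁.ne', hc.ne']; ring
    have s6 : 8/c * (B₁ / T₁ x) ≤ 8/c * (2*δ) := by
      have : (0:ℝ) ≤ 8/c := by positivity
      exact mul_le_mul_of_nonneg_left s2 this
    linarith
  have hfinal1 : tailMean T₂ - ε < halfConv T₂ x := by
    have : tailMean T₂ - ε/4 ≤ A₂ / T₂ x := le_trans hIT₂low lower1
    have hB : 0 ≤ B₂ / T₂ x := div_nonneg hB₂0 hTx₂.le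
    rw [hsplit₂]; linarith
  have hfinal2 : halfConv T₂ x < tailMean T₂ + ε := by
    have hee : ε' * (tailMean T₂ + 1) = ε/4 := by
      rw [hε'_def]; field_simp
    have h8 : 8/c * (2*δ) = ε/4 := by rw [hδ_def]; field_simp; ring
    have : (1 + ε') * (∫ y in (0:ℝ)..M, T₂ y) ≤ tailMean T₂ + ε/4 := by nlinarith
    rw [hsplit₂]; linarith
  rw [Real.dist_eq, abs_lt]
  exact ⟨by linarith, by linarith⟩

end Main1D

section Wrapper
variable {d : ℕ} {Ω : Type*} [MeasurableSpace Ω]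

lemma YA_set_eq (A : Set (Fin d → ℝ)) (hA : MemR A) (X : Ω → (Fin d → ℝ))
    (hXpos : ∀ ω i, 0 ≤ X ω i) {x : ℝ} (hx : 0 < x) :
    {ω | x < YA X A ω} = {ω | X ω ∈ x • A} := by
  obtain ⟨hopen, hincr, -, hcl⟩ := hA
  obtain ⟨ε, hε, hsep⟩ : ∃ ε > 0, ∀ a ∈ A, ε ≤ ‖a‖ := by
    rw [Metric.mem_closure_iff] at hcl
    push_neg at hcl
    obtain ⟨ε, hε, h⟩ := hcl
    exact ⟨ε, hε, fun a ha => by simpa [dist_zero_left] using h a ha⟩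
  ext ω
  simp only [Set.mem_setOf_eq, YA]
  set S : Set ℝ := {u : ℝ | 0 < u ∧ X ω ∈ u • A} with hS
  have hdc : ∀ u ∈ S, ∀ v : ℝ, 0 < v → v ≤ u → v ∈ S := by
    intro u hu v hv hvu
    obtain ⟨hu0, huA⟩ := hu
    rw [Set.mem_smul_set_iff_inv_smul_mem₀ hu0.ne'] at huA
    refine ⟨hv, ?_⟩
    rw [Set.mem_smul_set_iff_inv_smul_mem₀ hv.ne']
    have heq : v⁻¹ • X ω = u⁻¹ • X ω + (v⁻¹ - u⁻¹) • X ω := by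
      rw [← add_smul]; congr 1; ring
    rw [heq]
    refine hincr _ huA _ fun i => ?_
    have h1 : u⁻¹ ≤ v⁻¹ := inv_anti₀ hv hvu
    simp only [Pi.smul_apply, smul_eq_mul]
    exact mul_nonneg (by linarith) (hXpos ω i)
  have hbdd : BddAbove S := by
    refine ⟨‖X ω‖ / ε, fun u hu => ?_⟩
    obtain ⟨hu0, huA⟩ := hu
    rw [Set.mem_smul_set_iff_inv_smul_mem₀ hu0.ne'] at huA
    have h1 := hsep _ huA
    rw [norm_smul, Real.norm_eq_abs, abs_of_pos (inv_pos.2 hu0)] at h1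
    have h2 : u * ε ≤ u * (u⁻¹ * ‖X ω‖) := mul_le_mul_of_nonneg_left h1 hu0.le
    have h3 : u * (u⁻¹ * ‖X ω‖) = ‖X ω‖ := by field_simp
    rw [le_div_iff₀ hε]; linarith
  have hup : ∀ u ∈ S, ∃ t ∈ S, u < t := by
    intro u hu
    obtain ⟨hu0, huA⟩ := hu
    rw [Set.mem_smul_set_iff_inv_smul_mem₀ hu0.ne'] at huA
    have hcont : ContinuousAt (fun t : ℝ => t⁻¹ • X ω) u :=
      ((continuousAt_inv₀ hu0.ne').smul continuousAt_const)
    have hV : {t : ℝ | t⁻¹ • X ω ∈ A} ∈ nhds u := hcont.preimage_mem_nhds (hopen.mem_nhds huA)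
    obtain ⟨δ, hδ, hball⟩ := Metric.mem_nhds_iff.1 hV
    have ht0 : (0:ℝ) < u + δ/2 := by linarith
    refine ⟨u + δ/2, ⟨ht0, ?_⟩, by linarith⟩
    have ht : (u + δ/2) ∈ Metric.ball u δ := by
      rw [Metric.mem_ball, Real.dist_eq, show u + δ/2 - u = δ/2 by ring,
        abs_of_pos (by linarith)]
      linarith
    rw [Set.mem_smul_set_iff_inv_smul_mem₀ ht0.ne']
    exact hball ht
  constructor
  · intro hlt
    have hne : S.Nonempty := by
      by_contra hemp
      rw [Set.not_nonempty_iff_eq_empty] at hemp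
      rw [hemp, Real.sSup_empty] at hlt
      linarith
    obtain ⟨u, huS, hxu⟩ := exists_lt_of_lt_csSup hne hlt
    exact (hdc u huS x hx hxu.le).2
  · intro hmem
    obtain ⟨t, htS, hut⟩ := hup x ⟨hx, hmem⟩
    calc x < t := hut
    _ ≤ sSup S := le_csSup hbdd htS

lemma tailYA_eq_probIn (P : Measure Ω) (A : Set (Fin d → ℝ)) (hA : MemR A)
    (X : Ω → (Fin d → ℝ)) (hXpos : ∀ ω i, 0 ≤ X ω i) {x : ℝ} (hx : 0 < x) :
    tailYA P X A x = probIn P X A x := by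
  unfold tailYA probIn
  rw [YA_set_eq A hA X hXpos hx]

lemma tailYA_antitone_s3 (P : Measure Ω) [IsProbabilityMeasure P] (X : Ω → (Fin d → ℝ))
    (A : Set (Fin d → ℝ)) : Antitone (tailYA P X A) := by
  intro x y hxy
  exact ENNReal.toReal_mono (measure_ne_top P _)
    (measure_mono fun ω h => lt_of_le_of_lt hxy h)

end Wrapper

/-- Closure of `𝒮*_A` under strong tail-equivalence:
if `F₁ ∈ 𝒮*_A` and `P[X⁽¹⁾ ∈ xA] / P[X⁽²⁾ ∈ xA] → c ∈ (0,∞)`, then `F₂ ∈ 𝒮*_A`. -/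
theorem statement3 {d : ℕ} (A : Set (Fin d → ℝ)) (hA : MemR A)
    {Ω : Type*} [MeasurableSpace Ω] (P : Measure Ω) [IsProbabilityMeasure P]
    (X₁ X₂ : Ω → (Fin d → ℝ)) (hX₁ : Measurable X₁) (hX₂ : Measurable X₂)
    (hX₁pos : ∀ ω i, 0 ≤ X₁ ω i) (hX₂pos : ∀ ω i, 0 ≤ X₂ ω i)
    (h₁ : StrongSubexpFun (tailYA P X₁ A))
    (c : ℝ) (hc : 0 < c)
    (hlim : Tendsto (fun x => probIn P X₁ A x / probIn P X₂ A x) atTop (nhds c)) :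
    StrongSubexpFun (tailYA P X₂ A) :=  by
  classical
  set T₁ := tailYA P X₁ A with hT₁def
  set T₂ := tailYA P X₂ A with hT₂def
  have hanti₁ : Antitone T₁ := tailYA_antitone_s3 P X₁ A
  have hanti₂ : Antitone T₂ := tailYA_antitone_s3 P X₂ A
  have hlim' : Tendsto (fun x => T₁ x / T₂ x) atTop (nhds c) := by
    refine hlim.congr' ?_
    filter_upwards [eventually_gt_atTop (0:ℝ)] with x hx
    rw [hT₁def, hT₂def, tailYA_eq_probIn P A hA X₁ hX₁pos hx,
      tailYA_eq_probIn P A hA X₂ hX₂pos hx]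
  have hpos₂ : ∀ x, 0 < T₂ x := by
    have hev : ∀ᶠ x in atTop, c/2 < T₁ x / T₂ x :=
      hlim'.eventually (lt_mem_nhds (show c/2 < c by linarith))
    rw [eventually_atTop] at hev
    obtain ⟨x₀, hx₀⟩ := hev
    have key : ∀ z ≥ x₀, 0 < T₂ z := by
      intro z hz
      rcases lt_or_ge 0 (T₂ z) with h|h
      · exact h
      · exfalso
        have hz0 : T₂ z = 0 := le_antisymm h ENNReal.toReal_nonneg
        have := hx₀ z hz
        rw [hz0, div_zero] at this
        linarith
    intro x
    calc (0:ℝ) < T₂ (max x x₀) := key _ (le_max_right _ _)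
    _ ≤ T₂ x := hanti₂ (le_max_left _ _)
  have hint₂ : IntegrableOn T₂ (Ioi 0) volume := by
    obtain ⟨x₁', hx₁'⟩ : ∃ N : ℝ, ∀ z ≥ N, T₂ z ≤ 2/c * T₁ z := by
      have hev : ∀ᶠ x in atTop, c/2 < T₁ x / T₂ x :=
        hlim'.eventually (lt_mem_nhds (show c/2 < c by linarith))
      rw [eventually_atTop] at hev
      obtain ⟨N, hN⟩ := hev
      refine ⟨N, fun z hz => ?_⟩
      have h := hN z hz
      have h2 := hpos₂ z
      rw [lt_div_iff₀ h2] at h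
      rw [div_mul_eq_mul_div, le_div_iff₀ hc]
      linarith
    set x₁ : ℝ := max x₁' 1 with hx₁def
    have hx₁0 : (0:ℝ) < x₁ := lt_of_lt_of_le one_pos (le_max_right _ _)
    have hmeas₂ : Measurable T₂ := hanti₂.measurable
    have hI1 : IntegrableOn T₂ (Ioc 0 x₁) volume := by
      have h' := (hanti₂.intervalIntegrable (μ := volume) (a := 0) (b := x₁)).def'
      rwa [uIoc_of_le hx₁0.le] at h'
    have hI2 : IntegrableOn T₂ (Ioi x₁) volume := by
      have hTint : IntegrableOn T₁ (Ioi x₁) volume :=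
        (h₁.2.1).mono_set (Ioi_subset_Ioi hx₁0.le)
      refine Integrable.mono' (hTint.const_mul (2/c)) hmeas₂.aestronglyMeasurable ?_
      rw [ae_restrict_iff' measurableSet_Ioi]
      refine ae_of_all _ fun z hz => ?_
      rw [Real.norm_eq_abs, abs_of_pos (hpos₂ z)]
      exact hx₁' z (le_trans (le_max_left _ _) (le_of_lt hz))
    refine (hI1.union hI2).mono_set fun z hz => ?_
    rcases le_or_gt z x₁ with h|h
    · exact Or.inl ⟨hz, h⟩
    · exact Or.inr h
  exact strongSubexp_equiv h₁ hanti₁ hpos₂ hanti₂ hint₂ hc hlim'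
end

section
/- Let A ∈ 𝓡 and let X⁽¹⁾, X⁽²⁾ be independent random vectors in [0,∞)^d with distributions F₁, F₂ ∈ 𝓛_A. If the one-dimensional convolution F_A⁽¹⁾ * F_A⁽²⁾ is strong subexponential (∈ 𝒮*), then the distribution of X⁽¹⁾ + X⁽²⁾ satisfies P[X⁽¹⁾+X⁽²⁾ ∈ xA] ∼ P[Y_A⁽¹⁾ + Y_A⁽²⁾ > x] as x → ∞, and F₁ * F₂ ∈ 𝒮*_A (i.e. the distribution of Y_A* = sup{u : X⁽¹⁾+X⁽²⁾ ∈ uA} is strong subexponential). Conversely, if F₁ * F₂ ∈ 𝒮*_A then F_A⁽¹⁾ * F_A⁽²⁾ ∈ 𝒮*. -/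
open MeasureTheory ProbabilityTheory Filter Set Pointwise Asymptotics

/-!
Writing `Y_A = supScale A X`, the functional `supScale A` is monotone under adding nonnegative
vectors (`A` is increasing) and subadditive (`Aᶜ` is convex), so
`Y_A⁽ⁱ⁾ ≤ Y_A* ≤ Y_A⁽¹⁾ + Y_A⁽²⁾`; openness of `A` gives `P[X ∈ xA] = P[Y_A > x]` for `x > 0`.
Let `V` be whichever of the tails of `Y_A*` and `Y_A⁽¹⁾ + Y_A⁽²⁾` is assumed in `𝒮*`; it lies
between them. With `Gᵢ` the tail of `Y_A⁽ⁱ⁾`, independence bounds the tail of `Y_A*` below by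
`G₁ + G₂ - G₁G₂ ∼ G₁ + G₂`. Cutting `{Y_A⁽¹⁾ + Y_A⁽²⁾ > x}` into unit strips in `Y_A⁽¹⁾` and
comparing with `∫ V(x - y) V(y) dy` shows that, for long-tailed `G₁, G₂ ≤ V`, the tail of the
sum is at most `(1 + ε)(G₁ + G₂)`. Hence all these tails are `∼ G₁ + G₂`, and `𝒮*` passes
along such an equivalence because it is characterised, among long-tailed integrable tails, by
`∫_h^{x-h} V(x - y) V(y) dy ≤ ε V(x)` for every `ε > 0`, all large `h` and then all large `x`.
-/

open Topology

/-- `YA X A ω` is `supScale A (X ω)` by definition. -/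
noncomputable def supScale {d : ℕ} (A : Set (Fin d → ℝ)) (v : Fin d → ℝ) : ℝ :=
  sSup {u : ℝ | 0 < u ∧ v ∈ u • A}

lemma supScale_nonneg {d : ℕ} (A : Set (Fin d → ℝ)) (v : Fin d → ℝ) : 0 ≤ supScale A v :=
  Real.sSup_nonneg fun _ hu => hu.1.le

namespace MemR

variable {d : ℕ} {A : Set (Fin d → ℝ)}

lemma zero_notMem (hA : MemR A) : (0 : Fin d → ℝ) ∉ A :=
  fun h => hA.2.2.2 (subset_closure h)

lemma smul_mem_of_one_le (hA : MemR A) {a : Fin d → ℝ} (ha : a ∈ A) {t : ℝ} (ht : 1 ≤ t) :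
    t • a ∈ A := by
  by_contra hta
  have ht0 : 0 < t := one_pos.trans_le ht
  have h := hA.2.2.1 hta hA.zero_notMem (inv_pos.2 ht0).le (sub_nonneg.2 (inv_le_one_of_one_le₀ ht))
    (by ring)
  rw [smul_zero, add_zero, smul_smul, inv_mul_cancel₀ ht0.ne', one_smul] at h
  exact h ha

lemma mem_smul_of_le (hA : MemR A) {u u' : ℝ} (hu' : 0 < u') (hle : u' ≤ u)
    {v : Fin d → ℝ} (hv : v ∈ u • A) : v ∈ u' • A := by
  have hu : 0 < u := hu'.trans_le hle
  rw [mem_smul_set_iff_inv_smul_mem₀ hu.ne'] at hv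
  rw [mem_smul_set_iff_inv_smul_mem₀ hu'.ne']
  convert hA.smul_mem_of_one_le hv ((one_le_div hu').2 hle) using 1
  rw [smul_smul]
  field_simp

lemma bddAbove_scales (hA : MemR A) (v : Fin d → ℝ) :
    BddAbove {u : ℝ | 0 < u ∧ v ∈ u • A} := by
  obtain ⟨ε, hε, hfar⟩ : ∃ ε > 0, ∀ a ∈ A, ε ≤ ‖a‖ := by
    have h := hA.2.2.2
    rw [Metric.mem_closure_iff] at h
    push Not at h
    simpa [dist_eq_norm] using h
  refine ⟨‖v‖ / ε, fun u ⟨hu, hv⟩ => ?_⟩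
  rw [mem_smul_set_iff_inv_smul_mem₀ hu.ne'] at hv
  have hεv := hfar _ hv
  rw [norm_smul, Real.norm_eq_abs, abs_of_pos (inv_pos.2 hu)] at hεv
  rw [le_div_iff₀ hε]
  calc u * ε ≤ u * (u⁻¹ * ‖v‖) := mul_le_mul_of_nonneg_left hεv hu.le
    _ = ‖v‖ := by field_simp

lemma le_supScale (hA : MemR A) {v : Fin d → ℝ} {u : ℝ} (hu : 0 < u) (hv : v ∈ u • A) :
    u ≤ supScale A v :=
  le_csSup (hA.bddAbove_scales v) ⟨hu, hv⟩

/-- Openness of `A` lets the scale be pushed slightly beyond `x`. -/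
lemma lt_supScale_iff (hA : MemR A) {v : Fin d → ℝ} {x : ℝ} (hx : 0 < x) :
    x < supScale A v ↔ v ∈ x • A := by
  constructor
  · intro h
    have hne : {u : ℝ | 0 < u ∧ v ∈ u • A}.Nonempty := by
      by_contra hne
      rw [supScale, Set.not_nonempty_iff_eq_empty.1 hne, Real.sSup_empty] at h
      exact h.not_gt hx
    obtain ⟨u, ⟨-, hu⟩, hxu⟩ := exists_lt_of_lt_csSup hne h
    exact hA.mem_smul_of_le hx hxu.le hu
  · intro hv
    rw [mem_smul_set_iff_inv_smul_mem₀ hx.ne'] at hv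
    have hopen : IsOpen {t : ℝ | t • x⁻¹ • v ∈ A} :=
      hA.1.preimage (continuous_id.smul continuous_const)
    have hnear : ∀ᶠ t in 𝓝[<] (1 : ℝ), 0 < t ∧ t • x⁻¹ • v ∈ A :=
      nhdsWithin_le_nhds ((eventually_gt_nhds one_pos).and (hopen.mem_nhds (by simpa using hv)))
    obtain ⟨t, ⟨ht0, htA⟩, ht1⟩ := (hnear.and self_mem_nhdsWithin).exists
    refine lt_of_lt_of_le ?_ (hA.le_supScale (div_pos hx ht0) ?_)
    · exact (lt_div_iff₀ ht0).2 (mul_lt_of_lt_one_right hx ht1)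
    · rw [mem_smul_set_iff_inv_smul_mem₀ (div_pos hx ht0).ne', inv_div, div_eq_mul_inv,
        mul_smul]
      exact htA

lemma add_notMem_smul (hA : MemR A) {v w : Fin d → ℝ} {u₁ u₂ : ℝ} (hu₁ : 0 < u₁)
    (hu₂ : 0 < u₂) (hv : v ∉ u₁ • A) (hw : w ∉ u₂ • A) : v + w ∉ (u₁ + u₂) • A := by
  have hu : 0 < u₁ + u₂ := add_pos hu₁ hu₂
  rw [mem_smul_set_iff_inv_smul_mem₀ hu₁.ne'] at hv
  rw [mem_smul_set_iff_inv_smul_mem₀ hu₂.ne'] at hw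
  rw [mem_smul_set_iff_inv_smul_mem₀ hu.ne']
  have hcomb := hA.2.2.1 hv hw (div_pos hu₁ hu).le (div_pos hu₂ hu).le
    (by rw [← add_div, div_self hu.ne'])
  have e₁ : u₁ / (u₁ + u₂) * u₁⁻¹ = (u₁ + u₂)⁻¹ := by field_simp
  have e₂ : u₂ / (u₁ + u₂) * u₂⁻¹ = (u₁ + u₂)⁻¹ := by field_simp
  rwa [smul_smul, smul_smul, e₁, e₂, ← smul_add] at hcomb

lemma supScale_add_le (hA : MemR A) (v w : Fin d → ℝ) :
    supScale A (v + w) ≤ supScale A v + supScale A w := by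
  refine Real.sSup_le (fun u ⟨hu, hvw⟩ => ?_) (add_nonneg (supScale_nonneg A v)
    (supScale_nonneg A w))
  by_contra! hlt
  set δ := (u - supScale A v - supScale A w) / 2 with hδ_def
  have hδ : 0 < δ := by rw [hδ_def]; linarith
  have hu₁ : 0 < supScale A v + δ := by linarith [supScale_nonneg A v]
  have hu₂ : 0 < supScale A w + δ := by linarith [supScale_nonneg A w]
  refine hA.add_notMem_smul hu₁ hu₂ ?_ ?_ (by convert hvw using 2; ring)
  · exact fun h => ((hA.lt_supScale_iff hu₁).2 h).not_ge (by linarith)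
  · exact fun h => ((hA.lt_supScale_iff hu₂).2 h).not_ge (by linarith)

lemma supScale_le_add (hA : MemR A) (v : Fin d → ℝ) {w : Fin d → ℝ} (hw : ∀ i, 0 ≤ w i) :
    supScale A v ≤ supScale A (v + w) := by
  refine Real.sSup_le (fun u ⟨hu, hv⟩ => hA.le_supScale hu ?_) (supScale_nonneg A _)
  rw [mem_smul_set_iff_inv_smul_mem₀ hu.ne'] at hv ⊢
  rw [smul_add]
  exact hA.2.1 _ hv _ fun i => mul_nonneg (inv_pos.2 hu).le (hw i)

lemma lowerSemicontinuous_supScale (hA : MemR A) : LowerSemicontinuous (supScale A) := by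
  intro v y hy
  rcases lt_or_ge y 0 with hy0 | hy0
  · exact Eventually.of_forall fun v' => hy0.trans_le (supScale_nonneg A v')
  obtain ⟨y', hyy', hy'⟩ := exists_between hy
  have hy'0 : 0 < y' := hy0.trans_lt hyy'
  filter_upwards [(hA.1.smul₀ hy'0.ne').mem_nhds ((hA.lt_supScale_iff hy'0).1 hy')] with v' hv'
  exact hyy'.trans ((hA.lt_supScale_iff hy'0).2 hv')

lemma measurable_supScale (hA : MemR A) : Measurable (supScale A) :=
  hA.lowerSemicontinuous_supScale.measurable

lemma probIn_eq_tailYA (hA : MemR A) {Ω : Type*} [MeasurableSpace Ω] (P : Measure Ω)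
    (X : Ω → (Fin d → ℝ)) {x : ℝ} (hx : 0 < x) :
    probIn P X A x = tailYA P X A x := by
  unfold probIn tailYA
  congr 2
  ext ω
  exact (hA.lt_supScale_iff hx).symm

end MemR

section TailIntegrals

variable {V W : ℝ → ℝ}

lemma Antitone.intervalIntegrable_comp_sub_mul (hV : Antitone V) (hW : Antitone W)
    (hV0 : ∀ z, 0 ≤ V z) (hW0 : ∀ z, 0 ≤ W z) (x a b : ℝ) :
    IntervalIntegrable (fun y => V (x - y) * W y) volume a b := by
  have hmeas : Measurable fun y => V (x - y) * W y :=
    (hV.measurable.comp (measurable_const.sub measurable_id)).mul hW.measurable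
  rw [intervalIntegrable_iff]
  refine Measure.integrableOn_of_bounded (M := V (x - max a b) * W (min a b))
    measure_Ioc_lt_top.ne hmeas.aestronglyMeasurable ?_
  filter_upwards [ae_restrict_mem measurableSet_uIoc] with y hy
  have h₁ : min a b ≤ y := le_of_lt (by simpa using hy.1)
  have h₂ : y ≤ max a b := by simpa using hy.2
  rw [Real.norm_eq_abs, abs_of_nonneg (mul_nonneg (hV0 _) (hW0 _))]
  exact mul_le_mul (hV (by linarith)) (hW h₁) (hW0 _) (hV0 _)

lemma integral_comp_sub_mul_symm (V : ℝ → ℝ) (x h : ℝ) :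
    ∫ y in (x - h)..x, V (x - y) * V y = ∫ y in (0 : ℝ)..h, V (x - y) * V y := by
  have key := intervalIntegral.integral_comp_sub_left (a := 0) (b := h)
    (fun z => V z * V (x - z)) x
  simp only [sub_sub_cancel, sub_zero] at key
  rw [key]
  exact intervalIntegral.integral_congr fun y _ => mul_comm _ _

lemma integral_comp_sub_mul_split (hV : Antitone V) (hV0 : ∀ z, 0 ≤ V z) (x h : ℝ) :
    ∫ y in (0 : ℝ)..x, V (x - y) * V y =
      2 * (∫ y in (0 : ℝ)..h, V (x - y) * V y) + ∫ y in h..(x - h), V (x - y) * V y := by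
  have hi := hV.intervalIntegrable_comp_sub_mul hV hV0 hV0 x
  rw [← intervalIntegral.integral_add_adjacent_intervals ((hi 0 h).trans (hi h (x - h))) (hi _ x),
    ← intervalIntegral.integral_add_adjacent_intervals (hi 0 h) (hi h (x - h)),
    integral_comp_sub_mul_symm]
  ring

lemma mul_integral_le_integral_comp_sub_mul_s5 (hV : Antitone V) (hV0 : ∀ z, 0 ≤ V z)
    (hW : Antitone W) (hW0 : ∀ z, 0 ≤ W z) (x : ℝ) {a b : ℝ} (hab : a ≤ b) :
    V (x - a) * ∫ y in a..b, W y ≤ ∫ y in a..b, V (x - y) * W y := by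
  rw [← intervalIntegral.integral_const_mul]
  exact intervalIntegral.integral_mono_on hab (hW.intervalIntegrable.const_mul _)
    (hV.intervalIntegrable_comp_sub_mul hW hV0 hW0 x a b)
    fun y hy => mul_le_mul_of_nonneg_right (hV (by linarith [hy.1])) (hW0 y)

lemma integral_comp_sub_mul_le_mul_integral_s5 (hV : Antitone V) (hV0 : ∀ z, 0 ≤ V z)
    (hW : Antitone W) (hW0 : ∀ z, 0 ≤ W z) (x : ℝ) {a b : ℝ} (hab : a ≤ b) :
    ∫ y in a..b, V (x - y) * W y ≤ V (x - b) * ∫ y in a..b, W y := by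
  rw [← intervalIntegral.integral_const_mul]
  exact intervalIntegral.integral_mono_on hab
    (hV.intervalIntegrable_comp_sub_mul hW hV0 hW0 x a b) (hW.intervalIntegrable.const_mul _)
    fun y hy => mul_le_mul_of_nonneg_right (hV (by linarith [hy.2])) (hW0 y)

lemma two_mul_add_le_integral_comp_sub_mul (hV : Antitone V) (hV0 : ∀ z, 0 ≤ V z)
    {a x : ℝ} (ha : 0 ≤ a) (hax : a ≤ x / 2) :
    2 * (V x * (∫ y in (0 : ℝ)..a, V y) + V (x - a) * ∫ y in a..(x / 2), V y) ≤
      ∫ y in (0 : ℝ)..x, V (x - y) * V y := by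
  have hi := hV.intervalIntegrable_comp_sub_mul hV hV0 hV0 x
  have hhead := mul_integral_le_integral_comp_sub_mul_s5 hV hV0 hV hV0 x ha
  have hrest := mul_integral_le_integral_comp_sub_mul_s5 hV hV0 hV hV0 x hax
  rw [sub_zero] at hhead
  have hsplit := integral_comp_sub_mul_split hV hV0 x (x / 2)
  rw [show x - x / 2 = x / 2 by ring, intervalIntegral.integral_same] at hsplit
  have hhalf := intervalIntegral.integral_add_adjacent_intervals (hi 0 a) (hi a (x / 2))
  linarith

lemma mul_le_four_mul_integral_comp_sub_mul (hV : Antitone V) (hV0 : ∀ z, 0 ≤ V z) {x t : ℝ}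
    (h₁ : V t ≤ 2 * V (t + 1)) (h₂ : V (x - t - 1) ≤ 2 * V (x - t)) :
    V t * V (x - t - 1) ≤ 4 * ∫ y in t..(t + 1), V (x - y) * V y := by
  have hV1 : V (t + 1) ≤ ∫ y in t..(t + 1), V y := by
    have := intervalIntegral.integral_mono_on (μ := volume) (by linarith)
      intervalIntegrable_const hV.intervalIntegrable fun y (hy : y ∈ Icc t (t + 1)) => hV hy.2
    simpa using this
  have hint := mul_integral_le_integral_comp_sub_mul_s5 hV hV0 hV hV0 x (le_add_of_nonneg_right
    zero_le_one : t ≤ t + 1)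
  calc V t * V (x - t - 1) ≤ (2 * V (t + 1)) * (2 * V (x - t)) :=
        mul_le_mul h₁ h₂ (hV0 _) (by linarith [hV0 (t + 1)])
    _ = 4 * (V (x - t) * V (t + 1)) := by ring
    _ ≤ 4 * ∫ y in t..(t + 1), V (x - y) * V y := by
        gcongr
        exact (mul_le_mul_of_nonneg_left hV1 (hV0 _)).trans hint

/-- The one-step bound `hz₀` pays for the unit shifts between the strip products and the
integrand. -/
lemma sum_mul_le_four_mul_integral (hV : Antitone V) (hV0 : ∀ z, 0 ≤ V z) {z₀ h x : ℝ}
    (hz₀ : ∀ z ≥ z₀, V (z - 1) ≤ 2 * V z) (hh : z₀ + 1 ≤ h) (hx : 2 * h ≤ x) :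
    ∑ k ∈ Finset.range ⌈x - 2 * h⌉₊, V (h + k) * V (x - (h + k) - 1) ≤
      4 * ∫ y in (h - 1)..(x - (h - 1)), V (x - y) * V y := by
  set N := ⌈x - 2 * h⌉₊
  have hN : (N : ℝ) < x - 2 * h + 1 := Nat.ceil_lt_add_one (by linarith)
  have hi := hV.intervalIntegrable_comp_sub_mul hV hV0 hV0 x
  calc ∑ k ∈ Finset.range N, V (h + k) * V (x - (h + k) - 1)
      ≤ ∑ k ∈ Finset.range N, 4 * ∫ y in (h + k)..(h + k + 1), V (x - y) * V y := by
        refine Finset.sum_le_sum fun k hk => mul_le_four_mul_integral_comp_sub_mul hV hV0 ?_ ?_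
        · simpa using hz₀ (h + k + 1) (by linarith [(Nat.cast_nonneg k : (0 : ℝ) ≤ k)])
        · have hkN : (k : ℝ) + 1 ≤ N := by exact_mod_cast Finset.mem_range.1 hk
          exact hz₀ _ (by linarith)
    _ = 4 * ∫ y in h..(h + N), V (x - y) * V y := by
        rw [← Finset.mul_sum]
        have := intervalIntegral.sum_integral_adjacent_intervals (a := fun k : ℕ => h + k)
          (n := N) (μ := volume) fun k _ => hi _ _
        simp only [Nat.cast_zero, add_zero, Nat.cast_succ, ← add_assoc] at this
        rw [this]
    _ ≤ 4 * ∫ y in (h - 1)..(x - (h - 1)), V (x - y) * V y := by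
        gcongr
        exact intervalIntegral.integral_mono_interval (by linarith) (by linarith)
          (by linarith [(Nat.cast_nonneg N : (0 : ℝ) ≤ N)])
          (Eventually.of_forall fun y => mul_nonneg (hV0 _) (hV0 _)) (hi _ _)

end TailIntegrals

section StrongSubexp

variable {V W : ℝ → ℝ}

lemma isEquivalent_of_forall_eventually_le {f g : ℝ → ℝ} (hg : ∀ x, 0 < g x)
    (hup : ∀ ε > 0, ∀ᶠ x in atTop, f x ≤ (1 + ε) * g x)
    (hlow : ∀ ε > 0, ∀ᶠ x in atTop, (1 - ε) * g x ≤ f x) : f ~[atTop] g := by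
  refine isEquivalent_of_tendsto_one (Metric.tendsto_nhds.2 fun ε hε => ?_)
  filter_upwards [hup (ε / 2) (by positivity), hlow (ε / 2) (by positivity)] with x hx₁ hx₂
  rw [Pi.div_apply, Real.dist_eq, abs_lt]
  have h₁ := (div_le_iff₀ (hg x)).2 hx₁
  have h₂ := (le_div_iff₀ (hg x)).2 hx₂
  constructor <;> linarith

lemma Asymptotics.IsEquivalent.eventually_le_mul {u v : ℝ → ℝ} (h : u ~[atTop] v)
    (hv : ∀ x, 0 < v x) {c : ℝ} (hc : 1 < c) : ∀ᶠ x in atTop, u x ≤ c * v x := by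
  have hdiv := (isEquivalent_iff_tendsto_one (Eventually.of_forall fun x => (hv x).ne')).1 h
  filter_upwards [hdiv.eventually_lt_const hc] with x hx
  exact ((div_lt_iff₀ (hv x)).1 hx).le

lemma LongTailedFun.isEquivalent_shift (hV : LongTailedFun V) {a : ℝ} (ha : 0 < a) :
    (fun x => V (x - a)) ~[atTop] V :=
  isEquivalent_of_tendsto_one (hV.2 a ha)

lemma LongTailedFun.of_isEquivalent (hV : LongTailedFun V) (hW : ∀ x, 0 < W x)
    (hWV : W ~[atTop] V) : LongTailedFun W := by
  refine ⟨hW, fun a ha => ?_⟩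
  have hshift : (fun x => W (x - a)) ~[atTop] fun x => V (x - a) :=
    hWV.comp_tendsto (tendsto_atTop_add_const_right atTop (-a) tendsto_id)
  exact (isEquivalent_iff_tendsto_one (Eventually.of_forall fun x => (hW x).ne')).1
    ((hshift.trans (hV.isEquivalent_shift ha)).trans hWV.symm)

lemma tailMean_eq_add (hint : IntegrableOn V (Ioi 0)) {a : ℝ} (ha : 0 ≤ a) :
    tailMean V = (∫ y in (0 : ℝ)..a, V y) + ∫ y in Ioi a, V y :=
  (intervalIntegral.integral_interval_add_Ioi hint (hint.mono_set (Ioi_subset_Ioi ha))).symm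

lemma StrongSubexpFun.longTailed (hV : Antitone V) (hS : StrongSubexpFun V) :
    LongTailedFun V := by
  obtain ⟨hpos, hint, hlim⟩ := hS
  refine ⟨hpos, fun a ha => ?_⟩
  set c := ∫ y in (0 : ℝ)..a, V y
  set μa := ∫ y in Ioi a, V y
  have hinta : IntegrableOn V (Ioi a) := hint.mono_set (Ioi_subset_Ioi ha.le)
  have hμa : 0 < μa := by
    rw [setIntegral_pos_iff_support_of_nonneg_ae (Eventually.of_forall fun y => (hpos y).le) hinta,
      Function.support_eq_univ fun y => (hpos y).ne', univ_inter, Real.volume_Ioi]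
    exact ENNReal.zero_lt_top
  have hJ : Tendsto (fun x => ∫ y in a..(x / 2), V y) atTop (𝓝 μa) :=
    intervalIntegral_tendsto_integral_Ioi a hinta (tendsto_id.atTop_div_const two_pos)
  -- the convolution lower bound of `two_mul_add_le_integral_comp_sub_mul`, solved for the ratio
  have hbound : Tendsto (fun x => ((∫ y in (0 : ℝ)..x, V (x - y) * V y) / V x / 2 - c) /
      ∫ y in a..(x / 2), V y) atTop (𝓝 1) := by
    have := ((hlim.div_const 2).sub_const c).div hJ hμa.ne'
    rwa [tailMean_eq_add hint ha.le, show (2 * (c + μa) / 2 - c) / μa = 1 by field_simp; ring]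
      at this
  refine tendsto_of_tendsto_of_tendsto_of_le_of_le' tendsto_const_nhds hbound ?_ ?_
  · filter_upwards with x
    rw [one_le_div (hpos x)]
    exact hV (by linarith)
  · filter_upwards [eventually_ge_atTop (2 * a), hJ.eventually_const_lt hμa] with x hx hJx
    rw [le_div_iff₀ hJx, le_sub_iff_add_le, le_div_iff₀ two_pos, le_div_iff₀ (hpos x)]
    calc (V (x - a) / V x * (∫ y in a..(x / 2), V y) + c) * 2 * V x
        = 2 * (V x * c + V (x - a) * ∫ y in a..(x / 2), V y) := by
          field_simp [(hpos x).ne']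
          ring
      _ ≤ ∫ y in (0 : ℝ)..x, V (x - y) * V y :=
          two_mul_add_le_integral_comp_sub_mul hV (fun z => (hpos z).le) ha.le (by linarith)

lemma LongTailedFun.tendsto_integral_head_div (hW : Antitone W) (hL : LongTailedFun W) {h : ℝ}
    (hh : 0 < h) :
    Tendsto (fun x => (∫ y in (0 : ℝ)..h, W (x - y) * W y) / W x) atTop
      (𝓝 (∫ y in (0 : ℝ)..h, W y)) := by
  have hW0 : ∀ z, 0 ≤ W z := fun z => (hL.1 z).le
  have hup := (hL.2 h hh).mul_const (∫ y in (0 : ℝ)..h, W y)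
  rw [one_mul] at hup
  refine tendsto_of_tendsto_of_tendsto_of_le_of_le tendsto_const_nhds hup (fun x => ?_)
    (fun x => ?_)
  · rw [le_div_iff₀ (hL.1 x), mul_comm]
    simpa using mul_integral_le_integral_comp_sub_mul_s5 hW hW0 hW hW0 x hh.le
  · rw [div_mul_eq_mul_div, div_le_div_iff_of_pos_right (hL.1 x)]
    exact integral_comp_sub_mul_le_mul_integral_s5 hW hW0 hW hW0 x hh.le

lemma StrongSubexpFun.eventually_integral_middle_le (hV : Antitone V) (hS : StrongSubexpFun V)
    {ε : ℝ} (hε : 0 < ε) :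
    ∀ᶠ h in atTop, ∀ᶠ x in atTop, ∫ y in h..(x - h), V (x - y) * V y ≤ ε * V x := by
  obtain ⟨hpos, hint, hlim⟩ := hS
  have hV0 : ∀ z, 0 ≤ V z := fun z => (hpos z).le
  have hhead : ∀ᶠ h in atTop, tailMean V - ε / 4 < ∫ y in (0 : ℝ)..h, V y :=
    (intervalIntegral_tendsto_integral_Ioi 0 hint tendsto_id).eventually_const_lt
      (sub_lt_self _ (by positivity))
  filter_upwards [hhead, eventually_ge_atTop 0] with h hh h0
  filter_upwards [hlim.eventually_lt_const (lt_add_of_pos_right (2 * tailMean V)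
    (half_pos hε))] with x hx
  rw [div_lt_iff₀ (hpos x)] at hx
  have hsplit := integral_comp_sub_mul_split hV hV0 x h
  have hlow := mul_integral_le_integral_comp_sub_mul_s5 hV hV0 hV hV0 x h0
  rw [sub_zero] at hlow
  nlinarith [mul_lt_mul_of_pos_left hh (hpos x)]

lemma strongSubexpFun_of_integral_middle_le (hW : Antitone W) (hL : LongTailedFun W)
    (hint : IntegrableOn W (Ioi 0))
    (hmid : ∀ ε > 0, ∀ᶠ h in atTop, ∀ᶠ x in atTop,
      ∫ y in h..(x - h), W (x - y) * W y ≤ ε * W x) :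
    StrongSubexpFun W := by
  refine ⟨hL.1, hint, Metric.tendsto_nhds.2 fun ε hε => ?_⟩
  have hW0 : ∀ z, 0 ≤ W z := fun z => (hL.1 z).le
  have hmean : ∀ᶠ h in atTop, dist (∫ y in (0 : ℝ)..h, W y) (tailMean W) < ε / 8 :=
    Metric.tendsto_nhds.1 (intervalIntegral_tendsto_integral_Ioi 0 hint tendsto_id) _
      (by positivity)
  obtain ⟨h, hμh, hmidh, hh⟩ :=
    (hmean.and ((hmid (ε / 4) (by positivity)).and (eventually_gt_atTop 0))).exists
  filter_upwards [hmidh, Metric.tendsto_nhds.1 (hL.tendsto_integral_head_div hW hh) (ε / 8)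
    (by positivity), eventually_ge_atTop (2 * h)] with x hx hhead hx2
  have hmid0 : 0 ≤ (∫ y in h..(x - h), W (x - y) * W y) / W x :=
    div_nonneg (intervalIntegral.integral_nonneg (by linarith)
      fun y _ => mul_nonneg (hW0 _) (hW0 _)) (hW0 x)
  have hmidx : (∫ y in h..(x - h), W (x - y) * W y) / W x ≤ ε / 4 :=
    (div_le_iff₀ (hL.1 x)).2 hx
  rw [integral_comp_sub_mul_split hW hW0 x h, add_div, mul_div_assoc]
  rw [Real.dist_eq, abs_lt] at hμh hhead ⊢
  constructor <;> linarith [hμh.1, hμh.2, hhead.1, hhead.2]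

lemma integrableOn_Ioi_of_eventually_le (hW : Antitone W) (hW0 : ∀ x, 0 ≤ W x)
    (hV : IntegrableOn V (Ioi 0)) (hWV : ∀ᶠ x in atTop, W x ≤ V x) :
    IntegrableOn W (Ioi 0) := by
  obtain ⟨M, hM⟩ := eventually_atTop.1 (hWV.and (eventually_gt_atTop 0))
  rw [← Ioc_union_Ioi_eq_Ioi (hM M le_rfl).2.le]
  refine ((intervalIntegrable_iff_integrableOn_Ioc_of_le (hM M le_rfl).2.le).1
    hW.intervalIntegrable).union ?_
  refine Integrable.mono' (hV.mono_set (Ioi_subset_Ioi (hM M le_rfl).2.le))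
    hW.measurable.aestronglyMeasurable ?_
  filter_upwards [ae_restrict_mem measurableSet_Ioi] with y hy
  rw [Real.norm_eq_abs, abs_of_nonneg (hW0 y)]
  exact (hM y (le_of_lt hy)).1

lemma StrongSubexpFun.of_isEquivalent (hV : Antitone V) (hS : StrongSubexpFun V)
    (hW : Antitone W) (hWpos : ∀ x, 0 < W x) (hWV : W ~[atTop] V) : StrongSubexpFun W := by
  have hV0 : ∀ z, 0 ≤ V z := fun z => (hS.1 z).le
  have hW0 : ∀ z, 0 ≤ W z := fun z => (hWpos z).le
  have hWle := hWV.eventually_le_mul hS.1 one_lt_two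
  refine strongSubexpFun_of_integral_middle_le hW ((hS.longTailed hV).of_isEquivalent hWpos hWV)
    (integrableOn_Ioi_of_eventually_le hW hW0 (hS.2.1.const_mul 2) hWle) fun ε hε => ?_
  obtain ⟨M, hM⟩ := eventually_atTop.1 hWle
  filter_upwards [hS.eventually_integral_middle_le hV (show 0 < ε / 8 by positivity),
    eventually_ge_atTop M] with h hh hhM
  filter_upwards [hh, hWV.symm.eventually_le_mul hWpos one_lt_two,
    eventually_ge_atTop (2 * h)] with x hx hVx hx2
  calc ∫ y in h..(x - h), W (x - y) * W y ≤ ∫ y in h..(x - h), 4 * (V (x - y) * V y) := by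
        refine intervalIntegral.integral_mono_on (by linarith)
          (hW.intervalIntegrable_comp_sub_mul hW hW0 hW0 x h (x - h))
          ((hV.intervalIntegrable_comp_sub_mul hV hV0 hV0 x h (x - h)).const_mul 4)
          fun y hy => ?_
        have h₁ := hM (x - y) (by linarith [hy.2])
        have h₂ := hM y (by linarith [hy.1])
        nlinarith [hW0 (x - y), hW0 y, hV0 (x - y), hV0 y]
    _ = 4 * ∫ y in h..(x - h), V (x - y) * V y := intervalIntegral.integral_const_mul _ _
    _ ≤ ε * W x := by linarith [mul_le_mul_of_nonneg_left hVx hε.le]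

end StrongSubexp

lemma setOf_lt_add_subset {Ω : Type*} (Y₁ Y₂ : Ω → ℝ) (x h : ℝ) :
    {ω | x < Y₁ ω + Y₂ ω} ⊆ {ω | x - h < Y₁ ω} ∪ {ω | x - h < Y₂ ω} ∪
      ⋃ k ∈ Finset.range ⌈x - 2 * h⌉₊,
        {ω | Y₁ ω ∈ Ioc (h + k) (h + k + 1) ∧ x - (h + k) - 1 < Y₂ ω} := by
  intro ω (hω : x < Y₁ ω + Y₂ ω)
  by_cases hbig : x - h < Y₁ ω
  · exact Or.inl (Or.inl hbig)
  by_cases hsmall : Y₁ ω ≤ h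
  · exact Or.inl (Or.inr (show x - h < Y₂ ω by linarith))
  push Not at hbig hsmall
  -- `Y₁ ω` lies in the strip `(h + k, h + k + 1]` with `k + 1 = ⌈Y₁ ω - h⌉₊`
  have hpos : 0 < ⌈Y₁ ω - h⌉₊ := Nat.ceil_pos.2 (by linarith)
  have hle : ⌈Y₁ ω - h⌉₊ ≤ ⌈x - 2 * h⌉₊ := Nat.ceil_mono (by linarith)
  have hlt : (⌈Y₁ ω - h⌉₊ : ℝ) < Y₁ ω - h + 1 := Nat.ceil_lt_add_one (by linarith)
  have hge : Y₁ ω - h ≤ ⌈Y₁ ω - h⌉₊ := Nat.le_ceil _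
  obtain ⟨k, hk⟩ : ∃ k, ⌈Y₁ ω - h⌉₊ = k + 1 := ⟨_, (Nat.succ_pred_eq_of_pos hpos).symm⟩
  rw [hk] at hle hlt hge
  push_cast at hlt hge
  exact Or.inr (mem_iUnion₂.2 ⟨k, Finset.mem_range.2 (by omega),
    ⟨by linarith, by linarith⟩, by linarith⟩)

/-- `tailYA P X A` unfolds to `tailProb P (YA X A)`. -/
noncomputable def tailProb {Ω : Type*} [MeasurableSpace Ω] (P : Measure Ω) (Z : Ω → ℝ) (x : ℝ) :
    ℝ :=
  P.real {ω | x < Z ω}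

section Tails

variable {Ω : Type*} [MeasurableSpace Ω] {P : Measure Ω} [IsProbabilityMeasure P]
  {Y₁ Y₂ Y : Ω → ℝ}

lemma tailProb_antitone (Z : Ω → ℝ) : Antitone (tailProb P Z) :=
  fun _ _ hxy => measureReal_mono fun _ hω => lt_of_le_of_lt hxy hω

lemma tailProb_mono (h : ∀ ω, Y₁ ω ≤ Y ω) (x : ℝ) : tailProb P Y₁ x ≤ tailProb P Y x :=
  measureReal_mono fun ω hω => lt_of_lt_of_le hω (h ω)

lemma tendsto_tailProb_atTop (hY : Measurable Y) : Tendsto (tailProb P Y) atTop (𝓝 0) := by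
  have hempty : ⋂ x : ℝ, {ω | x < Y ω} = ∅ :=
    eq_empty_of_forall_notMem fun ω hω => lt_irrefl (Y ω) (mem_iInter.1 hω (Y ω))
  have h := tendsto_measure_iInter_atTop (μ := P) (s := fun x : ℝ => {ω | x < Y ω})
    (fun _ => (hY measurableSet_Ioi).nullMeasurableSet) (fun _ _ hxy _ hω => lt_of_le_of_lt hxy hω)
    ⟨0, measure_ne_top P _⟩
  rw [hempty, measure_empty] at h
  have h' := (ENNReal.tendsto_toReal ENNReal.zero_ne_top).comp h
  rw [ENNReal.toReal_zero] at h'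
  exact h'

lemma tailProb_add_sub_mul_le (hY₂ : Measurable Y₂) (hind : IndepFun Y₁ Y₂ P)
    (h₁ : ∀ ω, Y₁ ω ≤ Y ω) (h₂ : ∀ ω, Y₂ ω ≤ Y ω) (x : ℝ) :
    tailProb P Y₁ x + tailProb P Y₂ x - tailProb P Y₁ x * tailProb P Y₂ x ≤ tailProb P Y x := by
  have hinter : P.real (Y₁ ⁻¹' Ioi x ∩ Y₂ ⁻¹' Ioi x) = tailProb P Y₁ x * tailProb P Y₂ x := by
    have h := congrArg ENNReal.toReal
      (hind.measure_inter_preimage_eq_mul (Ioi x) (Ioi x) measurableSet_Ioi measurableSet_Ioi)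
    rwa [ENNReal.toReal_mul] at h
  have hunion := measureReal_union_add_inter (μ := P) (s := Y₁ ⁻¹' Ioi x) (hY₂ measurableSet_Ioi)
  have hsub : Y₁ ⁻¹' Ioi x ∪ Y₂ ⁻¹' Ioi x ⊆ {ω | x < Y ω} := by
    rintro ω (hω | hω)
    exacts [lt_of_lt_of_le hω (h₁ ω), lt_of_lt_of_le hω (h₂ ω)]
  have hY := measureReal_mono (μ := P) hsub
  change P.real (Y₁ ⁻¹' Ioi x) + P.real (Y₂ ⁻¹' Ioi x) - _ ≤ P.real {ω | x < Y ω}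
  linarith

lemma measureReal_strip_le (hind : IndepFun Y₁ Y₂ P) (t s : ℝ) :
    P.real {ω | Y₁ ω ∈ Ioc t (t + 1) ∧ s < Y₂ ω} ≤ tailProb P Y₁ t * tailProb P Y₂ s := by
  have hprod : P.real {ω | Y₁ ω ∈ Ioc t (t + 1) ∧ s < Y₂ ω} =
      P.real (Y₁ ⁻¹' Ioc t (t + 1)) * tailProb P Y₂ s := by
    have h := congrArg ENNReal.toReal
      (hind.measure_inter_preimage_eq_mul (Ioc t (t + 1)) (Ioi s) measurableSet_Ioc
        measurableSet_Ioi)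
    rwa [ENNReal.toReal_mul] at h
  rw [hprod]
  exact mul_le_mul_of_nonneg_right (measureReal_mono fun ω hω => hω.1) measureReal_nonneg

lemma eventually_tailProb_add_le (hind : IndepFun Y₁ Y₂ P) {V : ℝ → ℝ} (hV : Antitone V)
    (hS : StrongSubexpFun V) (hV₁ : ∀ x, tailProb P Y₁ x ≤ V x)
    (hV₂ : ∀ x, tailProb P Y₂ x ≤ V x) {ε : ℝ} (hε : 0 < ε) :
    ∀ᶠ h in atTop, ∀ᶠ x in atTop, tailProb P (fun ω => Y₁ ω + Y₂ ω) x ≤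
      tailProb P Y₁ (x - h) + tailProb P Y₂ (x - h) + ε * V x := by
  have hV0 : ∀ z, 0 ≤ V z := fun z => (hS.1 z).le
  obtain ⟨z₀, hz₀⟩ := eventually_atTop.1
    (((hS.longTailed hV).isEquivalent_shift one_pos).eventually_le_mul hS.1 one_lt_two)
  have hshift : Tendsto (fun h : ℝ => h - 1) atTop atTop :=
    tendsto_atTop_add_const_right atTop (-1) tendsto_id
  have hmiddle := hS.eventually_integral_middle_le hV (by positivity : 0 < ε / 4)
  filter_upwards [hshift.eventually hmiddle, eventually_ge_atTop (z₀ + 1)] with h hmid hh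
  filter_upwards [hmid, eventually_ge_atTop (2 * h)] with x hx hx2
  set S := ∑ k ∈ Finset.range ⌈x - 2 * h⌉₊,
    P.real {ω | Y₁ ω ∈ Ioc (h + k) (h + k + 1) ∧ x - (h + k) - 1 < Y₂ ω}
  have hstrips : S ≤ ε * V x :=
    calc S ≤ ∑ k ∈ Finset.range ⌈x - 2 * h⌉₊, V (h + k) * V (x - (h + k) - 1) :=
          Finset.sum_le_sum fun k _ => (measureReal_strip_le hind _ _).trans
            (mul_le_mul (hV₁ _) (hV₂ _) measureReal_nonneg (hV0 _))
      _ ≤ 4 * ∫ y in (h - 1)..(x - (h - 1)), V (x - y) * V y :=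
          sum_mul_le_four_mul_integral hV hV0 hz₀ hh hx2
      _ ≤ ε * V x := by linarith
  calc tailProb P (fun ω => Y₁ ω + Y₂ ω) x
      ≤ tailProb P Y₁ (x - h) + tailProb P Y₂ (x - h) + S :=
        (measureReal_mono (setOf_lt_add_subset Y₁ Y₂ x h)).trans <|
          (measureReal_union_le _ _).trans <|
            add_le_add (measureReal_union_le _ _) (measureReal_biUnion_finset_le _ _)
    _ ≤ tailProb P Y₁ (x - h) + tailProb P Y₂ (x - h) + ε * V x := by linarith

lemma eventually_mul_le_tailProb (hY₂ : Measurable Y₂) (hind : IndepFun Y₁ Y₂ P)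
    (h₁ : ∀ ω, Y₁ ω ≤ Y ω) (h₂ : ∀ ω, Y₂ ω ≤ Y ω) {ε : ℝ} (hε : 0 < ε) :
    ∀ᶠ x in atTop, (1 - ε) * (tailProb P Y₁ x + tailProb P Y₂ x) ≤ tailProb P Y x := by
  filter_upwards [(tendsto_tailProb_atTop (P := P) hY₂).eventually_lt_const hε] with x hx
  have hY₁0 : 0 ≤ tailProb P Y₁ x := measureReal_nonneg
  have hY₂0 : 0 ≤ tailProb P Y₂ x := measureReal_nonneg
  nlinarith [tailProb_add_sub_mul_le hY₂ hind h₁ h₂ x, mul_le_mul_of_nonneg_left hx.le hY₁0,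
    mul_nonneg hε.le hY₂0]

lemma eventually_tailProb_add_le_mul (hind : IndepFun Y₁ Y₂ P)
    (hL₁ : LongTailedFun (tailProb P Y₁)) (hL₂ : LongTailedFun (tailProb P Y₂))
    {V : ℝ → ℝ} (hV : Antitone V) (hS : StrongSubexpFun V) (hV₁ : ∀ x, tailProb P Y₁ x ≤ V x)
    (hV₂ : ∀ x, tailProb P Y₂ x ≤ V x)
    (hVsum : ∀ x, V x ≤ tailProb P (fun ω => Y₁ ω + Y₂ ω) x) {ε : ℝ} (hε : 0 < ε) :
    ∀ᶠ x in atTop, tailProb P (fun ω => Y₁ ω + Y₂ ω) x ≤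
      (1 + ε) * (tailProb P Y₁ x + tailProb P Y₂ x) := by
  set δ := min (ε / 4) (1 / 2)
  have hδ : 0 < δ := lt_min (by positivity) one_half_pos
  have hδε : δ ≤ ε / 4 := min_le_left _ _
  have hδ1 : δ ≤ 1 / 2 := min_le_right _ _
  obtain ⟨h, hbound, hh⟩ :=
    ((eventually_tailProb_add_le hind hV hS hV₁ hV₂ hδ).and (eventually_gt_atTop 0)).exists
  have hc : 1 < 1 + δ := lt_add_of_pos_right 1 hδ
  filter_upwards [hbound, (hL₁.isEquivalent_shift hh).eventually_le_mul hL₁.1 hc,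
    (hL₂.isEquivalent_shift hh).eventually_le_mul hL₂.1 hc] with x hx hx₁ hx₂
  have hG : 0 ≤ tailProb P Y₁ x + tailProb P Y₂ x := add_nonneg measureReal_nonneg
    measureReal_nonneg
  -- `δ V x ≤ δ H x` is absorbed on the left, and `(1 + δ) / (1 - δ) ≤ 1 + ε`
  have habsorb : (1 - δ) * tailProb P (fun ω => Y₁ ω + Y₂ ω) x ≤
      (1 + δ) * (tailProb P Y₁ x + tailProb P Y₂ x) := by
    nlinarith [mul_le_mul_of_nonneg_left (hVsum x) hδ.le]
  have hratio : 1 + δ ≤ (1 + ε) * (1 - δ) := by nlinarith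
  refine le_of_mul_le_mul_left ?_ (by linarith : 0 < 1 - δ)
  nlinarith [mul_le_mul_of_nonneg_right hratio hG]

theorem isEquivalent_tailProb_of_le_of_le (hY₂ : Measurable Y₂) (hind : IndepFun Y₁ Y₂ P)
    (h₁ : ∀ ω, Y₁ ω ≤ Y ω) (h₂ : ∀ ω, Y₂ ω ≤ Y ω) (hY : ∀ ω, Y ω ≤ Y₁ ω + Y₂ ω)
    (hL₁ : LongTailedFun (tailProb P Y₁)) (hL₂ : LongTailedFun (tailProb P Y₂))
    {V : ℝ → ℝ} (hV : Antitone V) (hS : StrongSubexpFun V) (hYV : ∀ x, tailProb P Y x ≤ V x)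
    (hVsum : ∀ x, V x ≤ tailProb P (fun ω => Y₁ ω + Y₂ ω) x) :
    tailProb P Y ~[atTop] V ∧ tailProb P (fun ω => Y₁ ω + Y₂ ω) ~[atTop] V := by
  have hV₁ x : tailProb P Y₁ x ≤ V x := (tailProb_mono h₁ x).trans (hYV x)
  have hV₂ x : tailProb P Y₂ x ≤ V x := (tailProb_mono h₂ x).trans (hYV x)
  have hYsum : ∀ x, tailProb P Y x ≤ tailProb P (fun ω => Y₁ ω + Y₂ ω) x := tailProb_mono hY
  have hG : ∀ x, 0 < tailProb P Y₁ x + tailProb P Y₂ x := fun x => add_pos (hL₁.1 x) (hL₂.1 x)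
  have hequiv {W : ℝ → ℝ} (hYW : ∀ x, tailProb P Y x ≤ W x)
      (hWsum : ∀ x, W x ≤ tailProb P (fun ω => Y₁ ω + Y₂ ω) x) :
      W ~[atTop] fun x => tailProb P Y₁ x + tailProb P Y₂ x := by
    refine isEquivalent_of_forall_eventually_le hG (fun ε hε => ?_) (fun ε hε => ?_)
    · filter_upwards [eventually_tailProb_add_le_mul hind hL₁ hL₂ hV hS hV₁ hV₂ hVsum hε]
        with x hx using (hWsum x).trans hx
    · filter_upwards [eventually_mul_le_tailProb hY₂ hind h₁ h₂ hε]
        with x hx using hx.trans (hYW x)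
  have hVG := hequiv hYV hVsum
  exact ⟨(hequiv (fun _ => le_rfl) hYsum).trans hVG.symm,
    (hequiv hYsum fun _ => le_rfl).trans hVG.symm⟩

end Tails

theorem statement5_general {d : ℕ} (A : Set (Fin d → ℝ)) (hA : MemR A)
    {Ω : Type*} [MeasurableSpace Ω] (P : Measure Ω) [IsProbabilityMeasure P]
    (X₁ X₂ : Ω → (Fin d → ℝ)) (hX₂ : Measurable X₂)
    (hX₁pos : ∀ ω i, 0 ≤ X₁ ω i) (hX₂pos : ∀ ω i, 0 ≤ X₂ ω i)
    (hindep : IndepFun X₁ X₂ P)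
    (hL₁ : LongTailedFun (tailYA P X₁ A)) (hL₂ : LongTailedFun (tailYA P X₂ A)) :
    (StrongSubexpFun (fun x => (P {ω | x < YA X₁ A ω + YA X₂ A ω}).toReal) →
      Tendsto (fun x => probIn P (fun ω => X₁ ω + X₂ ω) A x /
          (P {ω | x < YA X₁ A ω + YA X₂ A ω}).toReal) atTop (nhds 1) ∧
        StrongSubexpFun (tailYA P (fun ω => X₁ ω + X₂ ω) A)) ∧
    (StrongSubexpFun (tailYA P (fun ω => X₁ ω + X₂ ω) A) →
      StrongSubexpFun (fun x => (P {ω | x < YA X₁ A ω + YA X₂ A ω}).toReal)) := by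
  have hmeas := hA.measurable_supScale
  have h₁ ω : YA X₁ A ω ≤ YA (fun ω => X₁ ω + X₂ ω) A ω := hA.supScale_le_add _ (hX₂pos ω)
  have h₂ ω : YA X₂ A ω ≤ YA (fun ω => X₁ ω + X₂ ω) A ω := by
    have h := hA.supScale_le_add (X₂ ω) (hX₁pos ω)
    rwa [add_comm] at h
  have hsub ω : YA (fun ω => X₁ ω + X₂ ω) A ω ≤ YA X₁ A ω + YA X₂ A ω :=
    hA.supScale_add_le _ _
  have key {V : ℝ → ℝ} (hV : Antitone V) := isEquivalent_tailProb_of_le_of_le (hmeas.comp hX₂)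
    (hindep.comp hmeas hmeas) h₁ h₂ hsub hL₁ hL₂ hV
  have hT x : 0 < tailProb P (YA (fun ω => X₁ ω + X₂ ω) A) x :=
    (hL₁.1 x).trans_le (tailProb_mono h₁ x)
  have hH x : 0 < tailProb P (fun ω => YA X₁ A ω + YA X₂ A ω) x :=
    (hT x).trans_le (tailProb_mono hsub x)
  refine ⟨fun hS => ?_, fun hS => ?_⟩
  · have hTH := (key (tailProb_antitone _) hS (tailProb_mono hsub) fun _ => le_rfl).1
    refine ⟨?_, hS.of_isEquivalent (tailProb_antitone _) (tailProb_antitone _) hT hTH⟩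
    refine ((isEquivalent_iff_tendsto_one (Eventually.of_forall fun x => (hH x).ne')).1
      hTH).congr' ?_
    filter_upwards [eventually_gt_atTop 0] with x hx
    exact congrArg (· / _) (hA.probIn_eq_tailYA P _ hx).symm
  · exact hS.of_isEquivalent (tailProb_antitone _) (tailProb_antitone _) hH
      (key (tailProb_antitone _) hS (fun _ => le_rfl) (tailProb_mono hsub)).2

/-- Convolution closure for `𝒮*_A` within `𝓛_A`: for independent `X⁽¹⁾, X⁽²⁾` with
`F₁, F₂ ∈ 𝓛_A`, if `F_A⁽¹⁾ * F_A⁽²⁾ ∈ 𝒮*` (its tail is `P[Y_A⁽¹⁾+Y_A⁽²⁾ > x]`) then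
`P[X⁽¹⁾+X⁽²⁾ ∈ xA] ∼ P[Y_A⁽¹⁾+Y_A⁽²⁾ > x]` and `F₁ * F₂ ∈ 𝒮*_A`; conversely,
if `F₁ * F₂ ∈ 𝒮*_A` then `F_A⁽¹⁾ * F_A⁽²⁾ ∈ 𝒮*`. -/
theorem statement5 {d : ℕ} (A : Set (Fin d → ℝ)) (hA : MemR A)
    {Ω : Type*} [MeasurableSpace Ω] (P : Measure Ω) [IsProbabilityMeasure P]
    (X₁ X₂ : Ω → (Fin d → ℝ)) (hX₁ : Measurable X₁) (hX₂ : Measurable X₂)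
    (hX₁pos : ∀ ω i, 0 ≤ X₁ ω i) (hX₂pos : ∀ ω i, 0 ≤ X₂ ω i)
    (hindep : IndepFun X₁ X₂ P)
    (hL₁ : LongTailedFun (tailYA P X₁ A)) (hL₂ : LongTailedFun (tailYA P X₂ A)) :
    (StrongSubexpFun (fun x => (P {ω | x < YA X₁ A ω + YA X₂ A ω}).toReal) →
      Tendsto (fun x => probIn P (fun ω => X₁ ω + X₂ ω) A x /
          (P {ω | x < YA X₁ A ω + YA X₂ A ω}).toReal) atTop (nhds 1) ∧
        StrongSubexpFun (tailYA P (fun ω => X₁ ω + X₂ ω) A)) ∧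
    (StrongSubexpFun (tailYA P (fun ω => X₁ ω + X₂ ω) A) →
      StrongSubexpFun (fun x => (P {ω | x < YA X₁ A ω + YA X₂ A ω}).toReal)) :=
  statement5_general A hA P X₁ X₂ hX₂ hX₁pos hX₂pos hindep hL₁ hL₂
end

section
/- Let A ∈ 𝓡. If F^{n*} ∈ 𝒮*_A for some integer n ≥ 2, and F ∈ 𝓛_A, then F ∈ 𝒮*_A. (Conditional closure of 𝒮*_A with respect to convolution roots.) -/
open MeasureTheory ProbabilityTheory Filter Set Pointwise Asymptotics

/-!
Write `Yⱼ = Y_A(Xⱼ)`, `S = Y_A(X₀ + ⋯ + X_{n-1})` and `S'ⱼ = Y_A(∑_{i ≠ j} Xᵢ)`. Since `A` is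
increasing with convex complement, `Y_A` is monotone and subadditive, so `Yⱼ ≤ S ≤ Yⱼ + S'ⱼ` and
`S ≤ ∑ Yⱼ`, with `Yⱼ` independent of `S'ⱼ`. Let `T` and `G` be the tails of `Y₀` and `S`; then
`T ≤ G`. Splitting `{S > x}` according to whether some `Yⱼ` exceeds `x - (n - 1) s` gives
`G(x) ≤ n T(x - (n - 1) s) + n ∑ₖ T(k) G(x - k - 1)`, and the sum is a Riemann sum for the middle
part `∫ₛ^{x-s} G(x - y) G(y) dy`, which is `o(G(x))` because `G ∈ 𝒮*`. As `T` is long-tailed this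
gives `G ≤ 4 n T` eventually, and then the convolution integral of `T` is `≈ 2 μ_T T(x)` near the
ends and `o(G(x)) = o(T(x))` in the middle.
-/

open Topology

section RadialSup

variable {d : ℕ} {A : Set (Fin d → ℝ)} {v w : Fin d → ℝ} {u c : ℝ}

/-- `YA X A ω` is `radialSup A (X ω)` by definition. -/
noncomputable def radialSup (A : Set (Fin d → ℝ)) (w : Fin d → ℝ) : ℝ :=
  sSup {u : ℝ | 0 < u ∧ w ∈ u • A}

lemma radialSup_nonneg (A : Set (Fin d → ℝ)) (w : Fin d → ℝ) : 0 ≤ radialSup A w :=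
  Real.sSup_nonneg fun _ hu => hu.1.le

lemma bddAbove_setOf_mem_smul (h0 : (0 : Fin d → ℝ) ∉ closure A) (w : Fin d → ℝ) :
    BddAbove {u : ℝ | 0 < u ∧ w ∈ u • A} := by
  obtain ⟨ε, hε, hA⟩ : ∃ ε > 0, ∀ a ∈ A, ε ≤ dist 0 a := by
    simpa [Metric.mem_closure_iff] using h0
  refine ⟨‖w‖ / ε, fun u ⟨hu, hw⟩ => ?_⟩
  have := hA _ ((mem_smul_set_iff_inv_smul_mem₀ hu.ne' A w).1 hw)
  rw [dist_zero_left, norm_smul, norm_inv, Real.norm_of_nonneg hu.le, inv_mul_eq_div,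
    le_div_iff₀ hu] at this
  rwa [le_div_iff₀ hε, mul_comm]

lemma le_radialSup (h0 : (0 : Fin d → ℝ) ∉ closure A) (hu : 0 < u) (hw : w ∈ u • A) :
    u ≤ radialSup A w :=
  le_csSup (bddAbove_setOf_mem_smul h0 w) ⟨hu, hw⟩

lemma inv_smul_notMem_of_radialSup_lt (h0 : (0 : Fin d → ℝ) ∉ closure A)
    (hu : radialSup A w < u) : u⁻¹ • w ∉ A := fun hw =>
  have hu0 : 0 < u := (radialSup_nonneg A w).trans_lt hu
  hu.not_ge (le_radialSup h0 hu0 ((mem_smul_set_iff_inv_smul_mem₀ hu0.ne' A w).2 hw))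

lemma radialSup_le (h : ∀ u, 0 < u → w ∈ u • A → u ≤ c) (hc : 0 ≤ c) : radialSup A w ≤ c :=
  Real.sSup_le (fun u hu => h u hu.1 hu.2) hc

lemma lt_radialSup_iff (h0 : (0 : Fin d → ℝ) ∉ closure A) (hc : 0 ≤ c) :
    c < radialSup A w ↔ ∃ u, c < u ∧ w ∈ u • A := by
  refine ⟨fun h => ?_, fun ⟨u, hcu, hw⟩ => hcu.trans_le (le_radialSup h0 (hc.trans_lt hcu) hw)⟩
  by_contra! hle
  exact h.not_ge (radialSup_le (fun u _ hw => le_of_not_gt fun hcu => hle u hcu hw) hc)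

lemma measurable_radialSup (hA : IsOpen A) (h0 : (0 : Fin d → ℝ) ∉ closure A) :
    Measurable (radialSup A) := by
  refine measurable_of_Ioi fun c => ?_
  rcases lt_or_ge c 0 with hc | hc
  · have : radialSup A ⁻¹' Ioi c = univ :=
      eq_univ_of_forall fun w => hc.trans_le (radialSup_nonneg A w)
    simp [this]
  · have : radialSup A ⁻¹' Ioi c = ⋃ (u : ℝ) (_ : c < u), u • A := by
      ext w
      simp [lt_radialSup_iff h0 hc]
    rw [this]
    exact (isOpen_biUnion fun u hu => hA.smul₀ (hc.trans_lt hu).ne').measurableSet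

lemma radialSup_mono (hA : IncreasingSet A) (h0 : (0 : Fin d → ℝ) ∉ closure A) (hvw : v ≤ w) :
    radialSup A v ≤ radialSup A w := by
  refine radialSup_le (fun u hu hv => le_radialSup h0 hu ?_) (radialSup_nonneg A _)
  rw [mem_smul_set_iff_inv_smul_mem₀ hu.ne'] at hv ⊢
  have hnonneg : ∀ i, 0 ≤ (u⁻¹ • (w - v)) i := fun i =>
    mul_nonneg (inv_nonneg.2 hu.le) (sub_nonneg.2 (hvw i))
  simpa [smul_sub] using hA _ hv _ hnonneg

lemma radialSup_add_le (hA : Convex ℝ Aᶜ) (h0 : (0 : Fin d → ℝ) ∉ closure A)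
    (v w : Fin d → ℝ) : radialSup A (v + w) ≤ radialSup A v + radialSup A w := by
  refine radialSup_le (fun u hu hvw => ?_)
    (add_nonneg (radialSup_nonneg A v) (radialSup_nonneg A w))
  by_contra! hlt
  -- split `u = α + β` with `α > radialSup A v`, `β > radialSup A w`; then `u⁻¹ • (v + w)` is a
  -- convex combination of `α⁻¹ • v ∉ A` and `β⁻¹ • w ∉ A`.
  set t := (u - radialSup A v - radialSup A w) / 2
  have ht : 0 < t := by simp only [t]; linarith
  have hα : radialSup A v < radialSup A v + t := by linarith
  have hβ : radialSup A w < radialSup A w + t := by linarith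
  have hα0 := (radialSup_nonneg A v).trans_lt hα
  have hβ0 := (radialSup_nonneg A w).trans_lt hβ
  have hsum : radialSup A v + t + (radialSup A w + t) = u := by simp only [t]; ring
  have hcomb := hA (inv_smul_notMem_of_radialSup_lt h0 hα)
    (inv_smul_notMem_of_radialSup_lt h0 hβ) (div_pos hα0 hu).le (div_pos hβ0 hu).le
    (by rw [← add_div, hsum, div_self hu.ne'])
  have hscale : ∀ a : ℝ, a ≠ 0 → a / u * a⁻¹ = u⁻¹ := fun a ha => by field_simp
  rw [smul_smul, smul_smul, hscale _ hα0.ne', hscale _ hβ0.ne', ← smul_add] at hcomb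
  exact hcomb ((mem_smul_set_iff_inv_smul_mem₀ hu.ne' A _).1 hvw)

lemma radialSup_zero (h0 : (0 : Fin d → ℝ) ∉ closure A) : radialSup A 0 = 0 :=
  le_antisymm (radialSup_le (fun u hu h => absurd (subset_closure
    ((mem_smul_set_iff_inv_smul_mem₀ hu.ne' A 0).1 h)) (by simpa using h0)) le_rfl)
    (radialSup_nonneg A 0)

lemma radialSup_sum_le (hA : Convex ℝ Aᶜ) (h0 : (0 : Fin d → ℝ) ∉ closure A) {ι : Type*}
    (s : Finset ι) (g : ι → Fin d → ℝ) :
    radialSup A (∑ i ∈ s, g i) ≤ ∑ i ∈ s, radialSup A (g i) := by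
  induction s using Finset.cons_induction with
  | empty => simp [radialSup_zero h0]
  | cons a s ha ih =>
    rw [Finset.sum_cons, Finset.sum_cons]
    exact (radialSup_add_le hA h0 _ _).trans (add_le_add le_rfl ih)

end RadialSup

section Tail

variable {Ω : Type*} [MeasurableSpace Ω] {P : Measure Ω} {Y Y' Z : Ω → ℝ}

noncomputable def tail (P : Measure Ω) (Y : Ω → ℝ) (z : ℝ) : ℝ := P.real {ω | z < Y ω}

lemma tail_nonneg (P : Measure Ω) (Y : Ω → ℝ) (z : ℝ) : 0 ≤ tail P Y z := measureReal_nonneg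

lemma tail_le_tail [IsFiniteMeasure P] (h : ∀ ω, Y ω ≤ Y' ω) (z : ℝ) :
    tail P Y z ≤ tail P Y' z :=
  measureReal_mono fun ω hω => lt_of_lt_of_le hω (h ω)

lemma antitone_tail [IsFiniteMeasure P] (Y : Ω → ℝ) : Antitone (tail P Y) :=
  fun _ _ hzz' => measureReal_mono fun _ hω => lt_of_le_of_lt hzz' hω

lemma ProbabilityTheory.IdentDistrib.tail_eq {Ω' : Type*} [MeasurableSpace Ω']
    {P' : Measure Ω'} {W : Ω' → ℝ} (h : IdentDistrib Y W P P') : tail P Y = tail P' W :=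
  funext fun _ => congrArg ENNReal.toReal (h.measure_mem_eq measurableSet_Ioi)

/-- Slicing `Y` into the unit intervals `(k, k + 1]` and using independence on each slice. -/
lemma measureReal_add_gt_le_sum [IsFiniteMeasure P] (hind : IndepFun Y Z P) (s : ℕ)
    (b x : ℝ) :
    P.real {ω | s < Y ω ∧ Y ω ≤ b ∧ x < Y ω + Z ω}
      ≤ ∑ k ∈ Finset.Ico s ⌈b⌉₊, tail P Y k * tail P Z (x - k - 1) := by
  have hcover : {ω | s < Y ω ∧ Y ω ≤ b ∧ x < Y ω + Z ω}
      ⊆ ⋃ k ∈ Finset.Ico s ⌈b⌉₊, Y ⁻¹' Ioi (k : ℝ) ∩ Z ⁻¹' Ioi (x - k - 1) := by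
    rintro ω ⟨hsY, hYb, hxYZ⟩
    have hY0 : 0 < Y ω := (Nat.cast_nonneg s).trans_lt hsY
    have hs := Nat.lt_ceil.2 hsY
    have hb := Nat.ceil_mono hYb
    have hpos := Nat.ceil_pos.2 hY0
    refine mem_biUnion (x := ⌈Y ω⌉₊ - 1) (Finset.mem_Ico.2 ⟨by omega, by omega⟩) ⟨?_, ?_⟩
    · exact (Nat.lt_ceil (a := Y ω)).1 (by omega)
    · have hle : Y ω ≤ ((⌈Y ω⌉₊ - 1 : ℕ) : ℝ) + 1 := by
        exact_mod_cast Nat.ceil_le.1 (by omega)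
      simp only [mem_preimage, mem_Ioi]
      linarith
  refine (measureReal_mono hcover (measure_ne_top _ _)).trans
    ((measureReal_biUnion_finset_le _ _).trans ?_)
  gcongr with k
  simp only [Measure.real, hind.measure_inter_preimage_eq_mul _ _ measurableSet_Ioi
    measurableSet_Ioi, ENNReal.toReal_mul]
  rfl

end Tail

section Convolution

variable {G : ℝ → ℝ}

lemma Antitone.intervalIntegrable_conv (hG : Antitone G) (x a b : ℝ) :
    IntervalIntegrable (fun y => G (x - y) * G y) volume a b := by
  have hmono : Monotone fun y => G (x - y) := fun y z hyz => hG (by linarith)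
  refine intervalIntegrable_iff.2 (hmono.intervalIntegrable.def'.mul_bdd
    hG.measurable.aestronglyMeasurable (c := max |G (max a b)| |G (min a b)|) ?_)
  exact ae_restrict_of_forall_mem measurableSet_uIoc fun y hy =>
    abs_le_max_abs_abs (hG hy.2) (hG hy.1.le)

lemma integral_conv_reflect (x a b : ℝ) :
    ∫ y in a..b, G (x - y) * G y = ∫ y in (x - b)..(x - a), G (x - y) * G y := by
  rw [← intervalIntegral.integral_comp_sub_left]
  simp only [sub_sub_cancel, mul_comm]

lemma Antitone.integral_conv_eq_two_mul (hG : Antitone G) (x : ℝ) :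
    ∫ y in (0 : ℝ)..x, G (x - y) * G y = 2 * ∫ y in (0 : ℝ)..(x / 2), G (x - y) * G y := by
  rw [← intervalIntegral.integral_add_adjacent_intervals
    (hG.intervalIntegrable_conv x 0 (x / 2)) (hG.intervalIntegrable_conv x (x / 2) x),
    integral_conv_reflect x (x / 2) x, sub_self, show x - x / 2 = x / 2 by ring]
  ring

lemma Antitone.mul_integral_le_integral_conv (hG : Antitone G) (hG0 : ∀ y, 0 ≤ G y) {a b : ℝ}
    (hab : a ≤ b) (x : ℝ) :
    G (x - a) * ∫ y in a..b, G y ≤ ∫ y in a..b, G (x - y) * G y := by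
  rw [← intervalIntegral.integral_const_mul]
  refine intervalIntegral.integral_mono_on hab (hG.intervalIntegrable.const_mul _)
    (hG.intervalIntegrable_conv x a b) fun y hy => ?_
  exact mul_le_mul_of_nonneg_right (hG (by linarith [hy.1])) (hG0 y)

lemma Antitone.integral_conv_le_mul_integral (hG : Antitone G) (hG0 : ∀ y, 0 ≤ G y) {a b : ℝ}
    (hab : a ≤ b) (x : ℝ) :
    ∫ y in a..b, G (x - y) * G y ≤ G (x - b) * ∫ y in a..b, G y := by
  rw [← intervalIntegral.integral_const_mul]
  refine intervalIntegral.integral_mono_on hab (hG.intervalIntegrable_conv x a b)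
    (hG.intervalIntegrable.const_mul _) fun y hy => ?_
  exact mul_le_mul_of_nonneg_right (hG (by linarith [hy.2])) (hG0 y)

lemma Antitone.integral_conv_middle_le (hG : Antitone G) (hG0 : ∀ y, 0 ≤ G y) {c : ℝ}
    (hc : 0 ≤ c) (x : ℝ) :
    ∫ y in c..(x - c), G (x - y) * G y
      ≤ (∫ y in (0 : ℝ)..x, G (x - y) * G y) - 2 * (G x * ∫ y in (0 : ℝ)..c, G y) := by
  have hsplit := intervalIntegral.integral_add_adjacent_intervals
    (hG.intervalIntegrable_conv x 0 c) (hG.intervalIntegrable_conv x c (x - c))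
  rw [← intervalIntegral.integral_add_adjacent_intervals
    (hG.intervalIntegrable_conv x 0 (x - c)) (hG.intervalIntegrable_conv x (x - c) x), ← hsplit,
    integral_conv_reflect x (x - c) x, sub_self, sub_sub_cancel]
  have hhead := hG.mul_integral_le_integral_conv hG0 hc x
  rw [sub_zero] at hhead
  linarith

/-- A Riemann-sum bound: each term `G k * G (x - k - 1)` is dominated by the convolution integral
over `[k - 1, k]`. -/
lemma Antitone.sum_mul_le_integral_conv (hG : Antitone G) (hG0 : ∀ y, 0 ≤ G y) {m N : ℕ}
    {a b x : ℝ} (ha : a ≤ m - 1) (hb : N - 1 ≤ b) (hab : a ≤ b) :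
    ∑ k ∈ Finset.Ico m N, G k * G (x - k - 1) ≤ ∫ y in a..b, G (x - 2 - y) * G y := by
  have hconv0 : ∀ y, 0 ≤ G (x - 2 - y) * G y := fun y => mul_nonneg (hG0 _) (hG0 _)
  rcases lt_or_ge N m with hNm | hmN
  · rw [Finset.Ico_eq_empty_of_le hNm.le, Finset.sum_empty]
    exact intervalIntegral.integral_nonneg hab fun y _ => hconv0 y
  have hterm (k : ℕ) :
      G k * G (x - k - 1) ≤ ∫ y in ((k : ℝ) - 1)..k, G (x - 2 - y) * G y := by
    calc G k * G (x - k - 1) = ∫ _ in ((k : ℝ) - 1)..k, G k * G (x - k - 1) := by simp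
      _ ≤ _ := intervalIntegral.integral_mono_on (by linarith) intervalIntegrable_const
          (hG.intervalIntegrable_conv _ _ _) fun y hy => by
            rw [mul_comm]
            exact mul_le_mul (hG (by linarith [hy.1])) (hG hy.2) (hG0 _) (hG0 _)
  calc ∑ k ∈ Finset.Ico m N, G k * G (x - k - 1)
      ≤ ∑ k ∈ Finset.Ico m N,
          ∫ y in ((k : ℝ) - 1)..((k + 1 : ℕ) - 1), G (x - 2 - y) * G y := by
        gcongr with k
        simpa using hterm k
    _ = ∫ y in ((m : ℝ) - 1)..(N - 1), G (x - 2 - y) * G y :=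
        intervalIntegral.sum_integral_adjacent_intervals_Ico (a := fun k : ℕ => (k : ℝ) - 1) hmN
          fun _ _ => hG.intervalIntegrable_conv _ _ _
    _ ≤ ∫ y in a..b, G (x - 2 - y) * G y :=
        intervalIntegral.integral_mono_interval ha (by simp [hmN]) hb
          (ae_of_all _ hconv0) (hG.intervalIntegrable_conv _ _ _)

end Convolution

section StrongSubexp

variable {G T : ℝ → ℝ}

lemma intervalIntegral_le_tailMean (hG0 : ∀ y, 0 ≤ G y) (hint : IntegrableOn G (Ioi 0))
    (c : ℝ) : ∫ y in (0 : ℝ)..c, G y ≤ tailMean G := by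
  rcases le_or_gt c 0 with hc | hc
  · rw [intervalIntegral.integral_symm]
    exact (neg_nonpos.2 (intervalIntegral.integral_nonneg hc fun y _ => hG0 y)).trans
      (setIntegral_nonneg measurableSet_Ioi fun y _ => hG0 y)
  · rw [intervalIntegral.integral_of_le hc.le]
    exact setIntegral_mono_set hint (ae_of_all _ hG0) Ioc_subset_Ioi_self.eventuallyLE

lemma tendsto_intervalIntegral_tailMean (hint : IntegrableOn G (Ioi 0)) :
    Tendsto (fun c => ∫ y in (0 : ℝ)..c, G y) atTop (𝓝 (tailMean G)) :=
  intervalIntegral_tendsto_integral_Ioi 0 hint tendsto_id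

lemma LongTailedFun.eventually_sub_le (hT : LongTailedFun T) {a c : ℝ} (ha : 0 < a)
    (hc : 1 < c) : ∀ᶠ x in atTop, T (x - a) ≤ c * T x := by
  filter_upwards [(hT.2 a ha).eventually (eventually_le_nhds hc)] with x hx
  rwa [div_le_iff₀ (hT.1 x)] at hx

lemma StrongSubexpFun.eventually_integral_conv_middle_le (hG : StrongSubexpFun G)
    (hanti : Antitone G) {δ : ℝ} (hδ : 0 < δ) :
    ∀ᶠ c in atTop, ∀ᶠ x in atTop, ∫ y in c..(x - c), G (x - y) * G y ≤ δ * G x := by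
  obtain ⟨hpos, hint, htend⟩ := hG
  filter_upwards [(tendsto_intervalIntegral_tailMean hint).eventually
    (eventually_ge_nhds (by linarith : tailMean G - δ / 4 < tailMean G)),
    eventually_ge_atTop 0] with c hc hc0
  filter_upwards [htend.eventually
    (eventually_le_nhds (by linarith : 2 * tailMean G < 2 * tailMean G + δ / 2))] with x hx
  rw [div_le_iff₀ (hpos x)] at hx
  have hmiddle := hanti.integral_conv_middle_le (fun y => (hpos y).le) hc0 x
  have hhead := mul_le_mul_of_nonneg_left hc (hpos x).le
  linarith

/-- Splitting `∫₀^{x/2} G(x-y)G(y) dy` at `a` bounds `G (x - a) / G x` by a quantity that tends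
to `1` because `∫₀^x G(x-y)G(y) dy / G x → 2 μ`. -/
lemma StrongSubexpFun.longTailed_s7 (hG : StrongSubexpFun G) (hanti : Antitone G) :
    LongTailedFun G := by
  obtain ⟨hpos, hint, htend⟩ := hG
  have hG0 : ∀ y, 0 ≤ G y := fun y => (hpos y).le
  refine ⟨hpos, fun a ha => ?_⟩
  set m := tailMean G - ∫ y in (0 : ℝ)..a, G y
  have hm : 0 < m := by
    have hsplit := intervalIntegral.integral_add_adjacent_intervals
      (hanti.intervalIntegrable (μ := volume) (a := 0) (b := a))
      (hanti.intervalIntegrable (b := a + 1))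
    have hpos' := intervalIntegral.intervalIntegral_pos_of_pos_on hanti.intervalIntegrable
      (fun y _ => hpos y) (lt_add_one a)
    linarith [intervalIntegral_le_tailMean hG0 hint (a + 1)]
  have hden : Tendsto (fun x => ∫ y in a..(x / 2), G y) atTop (𝓝 m) := by
    refine (((tendsto_intervalIntegral_tailMean hint).comp
      (tendsto_id.atTop_div_const two_pos)).sub_const _).congr fun x => ?_
    exact intervalIntegral.integral_interval_sub_left hanti.intervalIntegrable
      hanti.intervalIntegrable
  have hnum : Tendsto (fun x => (∫ y in (0 : ℝ)..x, G (x - y) * G y) / G x / 2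
      - ∫ y in (0 : ℝ)..a, G y) atTop (𝓝 m) := by
    convert (htend.div_const 2).sub_const (∫ y in (0 : ℝ)..a, G y) using 2
    ring
  have hu := hnum.div hden hm.ne'
  rw [div_self hm.ne'] at hu
  refine tendsto_of_tendsto_of_tendsto_of_le_of_le' tendsto_const_nhds hu
    (Eventually.of_forall fun x => (one_le_div (hpos x)).2 (hanti (by linarith))) ?_
  filter_upwards [hden.eventually (eventually_gt_nhds hm), eventually_ge_atTop (2 * a)]
    with x hI hx
  have hhead := hanti.mul_integral_le_integral_conv hG0 (a := a) (b := x / 2) (by linarith) x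
  have htail := hanti.mul_integral_le_integral_conv hG0 (a := 0) (b := a) ha.le x
  rw [sub_zero] at htail
  have hsum := intervalIntegral.integral_add_adjacent_intervals
    (hanti.intervalIntegrable_conv x 0 a) (hanti.intervalIntegrable_conv x a (x / 2))
  have hhalf := hanti.integral_conv_eq_two_mul x
  have hJ : (∫ y in (0 : ℝ)..x, G (x - y) * G y) / G x / 2 * G x
      = (∫ y in (0 : ℝ)..x, G (x - y) * G y) / 2 := by
    field_simp [(hpos x).ne']
  rw [Pi.div_apply, div_le_div_iff₀ (hpos x) hI, sub_mul, hJ]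
  linarith

lemma Antitone.integral_conv_le_of_le (hT : Antitone T) (hT0 : ∀ y, 0 ≤ T y)
    (hG : Antitone G) (hTG : ∀ y, T y ≤ G y) {c x : ℝ} (hc : 0 ≤ c) (hcx : 2 * c ≤ x) :
    ∫ y in (0 : ℝ)..x, T (x - y) * T y
      ≤ 2 * (T (x - c) * (∫ y in (0 : ℝ)..c, T y) + ∫ y in c..(x - c), G (x - y) * G y) := by
  rw [hT.integral_conv_eq_two_mul, ← intervalIntegral.integral_add_adjacent_intervals
    (hT.intervalIntegrable_conv x 0 c) (hT.intervalIntegrable_conv x c (x / 2))]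
  gcongr 2 * (?_ + ?_)
  · exact hT.integral_conv_le_mul_integral hT0 hc x
  · calc ∫ y in c..(x / 2), T (x - y) * T y ≤ ∫ y in c..(x / 2), G (x - y) * G y :=
          intervalIntegral.integral_mono_on (by linarith) (hT.intervalIntegrable_conv _ _ _)
            (hG.intervalIntegrable_conv _ _ _) fun y _ =>
              mul_le_mul (hTG _) (hTG _) (hT0 _) ((hT0 _).trans (hTG _))
      _ ≤ ∫ y in c..(x - c), G (x - y) * G y :=
          intervalIntegral.integral_mono_interval le_rfl (by linarith) (by linarith)
            (ae_of_all _ fun y => mul_nonneg ((hT0 _).trans (hTG _)) ((hT0 _).trans (hTG _)))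
            (hG.intervalIntegrable_conv _ _ _)

/-- Near the ends the convolution integral of `T` is controlled by long-tailedness, in the middle
by `T ≤ G ≤ C T` and `G ∈ 𝒮*`. -/
theorem StrongSubexpFun.of_le_of_eventually_le (hG : StrongSubexpFun G) (hGanti : Antitone G)
    (hT : LongTailedFun T) (hTanti : Antitone T) (hTG : ∀ x, T x ≤ G x) {C : ℝ}
    (hGT : ∀ᶠ x in atTop, G x ≤ C * T x) : StrongSubexpFun T := by
  have hT0 : ∀ y, 0 ≤ T y := fun y => (hT.1 y).le
  have hint : IntegrableOn T (Ioi 0) := hG.2.1.mono' hTanti.measurable.aestronglyMeasurable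
    (ae_of_all _ fun y => (Real.norm_of_nonneg (hT0 y)).trans_le (hTG y))
  refine ⟨hT.1, hint, tendsto_order.2 ⟨fun b hb => ?_, fun b hb => ?_⟩⟩
  · have hlow : Tendsto (fun x => 2 * ∫ y in (0 : ℝ)..(x / 2), T y) atTop
        (𝓝 (2 * tailMean T)) :=
      ((tendsto_intervalIntegral_tailMean hint).comp
        (tendsto_id.atTop_div_const two_pos)).const_mul 2
    filter_upwards [hlow.eventually (eventually_gt_nhds hb), eventually_ge_atTop 0] with x hx hx0
    have hhead := hTanti.mul_integral_le_integral_conv hT0 (a := 0) (b := x / 2) (by linarith) x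
    rw [sub_zero] at hhead
    rw [lt_div_iff₀ (hT.1 x), hTanti.integral_conv_eq_two_mul]
    nlinarith [hT.1 x]
  · set δ := (b - 2 * tailMean T) / (4 * (|C| + 1))
    have hδ : 0 < δ := div_pos (by linarith) (by positivity)
    have hδC : 2 * δ * C < b - 2 * tailMean T := by
      have h4 : δ * (4 * (|C| + 1)) = b - 2 * tailMean T := div_mul_cancel₀ _ (by positivity)
      nlinarith [le_abs_self C]
    obtain ⟨c, hc, hc0⟩ :=
      ((hG.eventually_integral_conv_middle_le hGanti hδ).and (eventually_gt_atTop 0)).exists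
    have hv : Tendsto (fun x => 2 * (T (x - c) / T x * tailMean T) + 2 * δ * C) atTop
        (𝓝 (2 * (1 * tailMean T) + 2 * δ * C)) :=
      (((hT.2 c hc0).mul_const (tailMean T)).const_mul 2).add_const _
    filter_upwards [hc, hGT, eventually_ge_atTop (2 * c),
      hv.eventually (eventually_lt_nhds (by linarith : 2 * (1 * tailMean T) + 2 * δ * C < b))]
      with x hmiddle hGTx hx hvx
    refine lt_of_le_of_lt ?_ hvx
    have hsplit := hTanti.integral_conv_le_of_le hT0 hGanti hTG hc0.le hx
    have hhead := mul_le_mul_of_nonneg_left (intervalIntegral_le_tailMean hT0 hint c) (hT0 (x - c))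
    have hGTx' := mul_le_mul_of_nonneg_left hGTx hδ.le
    have e : (2 * (T (x - c) / T x * tailMean T) + 2 * δ * C) * T x
        = 2 * (T (x - c) * tailMean T) + 2 * δ * (C * T x) := by
      field_simp [(hT.1 x).ne']
    rw [div_le_iff₀ (hT.1 x), e]
    linarith

end StrongSubexp

section Domination

variable {Ω : Type*} [MeasurableSpace Ω] {P : Measure Ω} [IsFiniteMeasure P] {n : ℕ}
  {T : ℝ → ℝ} {Y S' : ℕ → Ω → ℝ} {S : Ω → ℝ}

/-- If `S` exceeds `x`, either some `Y j` exceeds `x - (n - 1) s`, or all are at most that, one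
of them exceeds `s` (as `S ≤ ∑ Y j ≤ n s` otherwise), and then `x < Y j + S' j`. -/
lemma tail_le_of_subadditive (hYT : ∀ j ∈ Finset.range n, tail P (Y j) = T)
    (hind : ∀ j ∈ Finset.range n, IndepFun (Y j) (S' j) P)
    (hS'S : ∀ j ∈ Finset.range n, ∀ ω, S' j ω ≤ S ω)
    (hSY : ∀ j ∈ Finset.range n, ∀ ω, S ω ≤ Y j ω + S' j ω)
    (hSsum : ∀ ω, S ω ≤ ∑ j ∈ Finset.range n, Y j ω) {s : ℕ} {x : ℝ} (hx : n * s ≤ x) :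
    tail P S x ≤ n * T (x - (n - 1) * s)
      + n * ∑ k ∈ Finset.Ico s ⌈x - (n - 1) * s⌉₊, T k * tail P S (x - k - 1) := by
  set b := x - (n - 1) * s
  have hcover : {ω | x < S ω} ⊆ (⋃ j ∈ Finset.range n, {ω | b < Y j ω})
      ∪ ⋃ j ∈ Finset.range n, {ω | s < Y j ω ∧ Y j ω ≤ b ∧ x < Y j ω + S' j ω} := by
    intro ω hω
    by_cases hbig : ∃ j ∈ Finset.range n, b < Y j ω
    · obtain ⟨j, hj, hjb⟩ := hbig
      exact Or.inl (mem_biUnion hj hjb)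
    push Not at hbig
    obtain ⟨j, hj, hjs⟩ : ∃ j ∈ Finset.range n, (s : ℝ) < Y j ω := by
      by_contra! hall
      have := Finset.sum_le_sum hall
      simp only [Finset.sum_const, Finset.card_range, nsmul_eq_mul] at this
      exact (hω.trans_le (hSsum ω)).not_ge (this.trans hx)
    exact Or.inr (mem_biUnion hj ⟨hjs, hbig j hj, hω.trans_le (hSY j hj ω)⟩)
  have hslice : ∀ j ∈ Finset.range n,
      P.real {ω | s < Y j ω ∧ Y j ω ≤ b ∧ x < Y j ω + S' j ω}
        ≤ ∑ k ∈ Finset.Ico s ⌈b⌉₊, T k * tail P S (x - k - 1) := fun j hj => by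
    rw [← hYT j hj]
    refine (measureReal_add_gt_le_sum (hind j hj) s b x).trans ?_
    gcongr with k
    · exact tail_nonneg P (Y j) k
    · exact tail_le_tail (hS'S j hj) _
  calc tail P S x
      ≤ P.real (⋃ j ∈ Finset.range n, {ω | b < Y j ω})
        + P.real (⋃ j ∈ Finset.range n, {ω | s < Y j ω ∧ Y j ω ≤ b ∧ x < Y j ω + S' j ω}) :=
        (measureReal_mono hcover (measure_ne_top _ _)).trans (measureReal_union_le _ _)
    _ ≤ ∑ j ∈ Finset.range n, T b
        + ∑ j ∈ Finset.range n, ∑ k ∈ Finset.Ico s ⌈b⌉₊, T k * tail P S (x - k - 1) := by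
        gcongr
        · exact (measureReal_biUnion_finset_le _ _).trans
            (Finset.sum_le_sum fun j hj => (congrFun (hYT j hj) b).le)
        · exact (measureReal_biUnion_finset_le _ _).trans (Finset.sum_le_sum hslice)
    _ = _ := by simp only [Finset.sum_const, Finset.card_range, nsmul_eq_mul]

/-- With `s` large, the sum in `tail_le_of_subadditive` is a Riemann sum for the middle part of the
convolution integral of `G = tail P S`, which is `o(G)`; long-tailedness absorbs the shifts. -/
lemma eventually_tail_le_mul_of_subadditive (hn : 2 ≤ n)
    (hYT : ∀ j ∈ Finset.range n, tail P (Y j) = T)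
    (hind : ∀ j ∈ Finset.range n, IndepFun (Y j) (S' j) P)
    (hS'S : ∀ j ∈ Finset.range n, ∀ ω, S' j ω ≤ S ω)
    (hSY : ∀ j ∈ Finset.range n, ∀ ω, S ω ≤ Y j ω + S' j ω)
    (hSsum : ∀ ω, S ω ≤ ∑ j ∈ Finset.range n, Y j ω) (hT : LongTailedFun T)
    (hTG : ∀ x, T x ≤ tail P S x) (hG : StrongSubexpFun (tail P S)) :
    ∀ᶠ x in atTop, tail P S x ≤ 4 * n * T x := by
  set G := tail P S
  have hGanti : Antitone G := antitone_tail S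
  have hG0 : ∀ y, 0 ≤ G y := tail_nonneg P S
  have hn' : (2 : ℝ) ≤ n := by exact_mod_cast hn
  have hshift : Tendsto (fun x : ℝ => x - 2) atTop atTop :=
    tendsto_atTop_atTop.2 fun b => ⟨b + 2, fun x hx => by linarith⟩
  have hδ : (0 : ℝ) < 1 / (4 * n) := by positivity
  obtain ⟨c₀, hc₀⟩ := eventually_atTop.1 (hG.eventually_integral_conv_middle_le hGanti hδ)
  obtain ⟨s, hs', hsc⟩ : ∃ s : ℕ, (1 : ℝ) ≤ s ∧ c₀ ≤ s - 2 := ⟨⌈c₀⌉₊ + 3, by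
    push_cast
    constructor <;> linarith [Nat.le_ceil c₀, (Nat.cast_nonneg _ : (0 : ℝ) ≤ ⌈c₀⌉₊)]⟩
  filter_upwards [hshift.eventually (hc₀ _ hsc),
    hT.eventually_sub_le (a := (n - 1) * s) (by nlinarith) one_lt_two,
    (hG.longTailed_s7 hGanti).eventually_sub_le two_pos one_lt_two,
    eventually_ge_atTop ((n : ℝ) * s)] with x hmid hTx hGx hx
  have hb0 : 0 ≤ x - (n - 1) * s := by nlinarith
  have hbs : x - (n - 1) * s ≤ x - s := by nlinarith
  have hriemann : ∑ k ∈ Finset.Ico s ⌈x - (n - 1) * s⌉₊, T k * G (x - k - 1)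
      ≤ ∫ y in ((s : ℝ) - 2)..(x - 2 - (s - 2)), G (x - 2 - y) * G y := by
    calc ∑ k ∈ Finset.Ico s ⌈x - (n - 1) * s⌉₊, T k * G (x - k - 1)
        ≤ ∑ k ∈ Finset.Ico s ⌈x - (n - 1) * s⌉₊, G k * G (x - k - 1) :=
          Finset.sum_le_sum fun k _ => mul_le_mul_of_nonneg_right (hTG k) (hG0 _)
      _ ≤ _ := hGanti.sum_mul_le_integral_conv hG0 (by linarith)
          (by linarith [Nat.ceil_lt_add_one hb0]) (by linarith)
  have hbound := tail_le_of_subadditive hYT hind hS'S hSY hSsum hx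
  have hn0 : (0 : ℝ) < n := by linarith
  have hsum : (n : ℝ) * (1 / (4 * n) * G (x - 2)) = G (x - 2) / 4 := by
    field_simp
  have hfirst := mul_le_mul_of_nonneg_left hTx hn0.le
  have hsecond := mul_le_mul_of_nonneg_left (hriemann.trans hmid) hn0.le
  linarith

end Domination

/-- Conditional closure of `𝒮*_A` under convolution roots: if `F^{n*} ∈ 𝒮*_A` for some
`n ≥ 2` and `F ∈ 𝓛_A`, then `F ∈ 𝒮*_A`. -/
theorem statement7 {d : ℕ} (A : Set (Fin d → ℝ)) (hA : MemR A)
    {Ω : Type*} [MeasurableSpace Ω] (P : Measure Ω) [IsProbabilityMeasure P]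
    (X : ℕ → Ω → (Fin d → ℝ)) (hmeas : ∀ i, Measurable (X i))
    (hpos : ∀ i ω j, 0 ≤ X i ω j)
    (hindep : iIndepFun X P)
    (hident : ∀ i, IdentDistrib (X i) (X 0) P P)
    (n : ℕ) (hn : 2 ≤ n)
    (hconv : StrongSubexpFun (tailYA P (fun ω => ∑ i ∈ Finset.range n, X i ω) A))
    (hlong : LongTailedFun (tailYA P (X 0) A)) :
    StrongSubexpFun (tailYA P (X 0) A) := by
  obtain ⟨hAopen, hAinc, hAconv, h0⟩ := hA
  have hR := measurable_radialSup hAopen h0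
  set Y : ℕ → Ω → ℝ := fun j ω => radialSup A (X j ω)
  set S' : ℕ → Ω → ℝ := fun j ω => radialSup A (∑ i ∈ (Finset.range n).erase j, X i ω)
  set S : Ω → ℝ := fun ω => radialSup A (∑ i ∈ Finset.range n, X i ω)
  have hS'S : ∀ j ∈ Finset.range n, ∀ ω, S' j ω ≤ S ω := fun j _ ω =>
    radialSup_mono hAinc h0 (Finset.sum_le_sum_of_subset_of_nonneg (f := fun i => X i ω)
      (Finset.erase_subset _ _) fun i _ _ => hpos i ω)
  have hSY : ∀ j ∈ Finset.range n, ∀ ω, S ω ≤ Y j ω + S' j ω := fun j hj ω => by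
    simp only [Y, S', S, ← Finset.add_sum_erase _ _ hj]
    exact radialSup_add_le hAconv h0 _ _
  have hind : ∀ j, IndepFun (Y j) (S' j) P := fun j => by
    have hS' : S' j = radialSup A ∘ ∑ i ∈ (Finset.range n).erase j, X i := by
      ext ω
      simp only [S', Function.comp_apply, Finset.sum_apply]
    rw [hS']
    exact ((hindep.indepFun_finsetSum_of_notMem hmeas (Finset.notMem_erase j _)).comp hR hR).symm
  have hYT : ∀ j, tail P (Y j) = tail P (Y 0) := fun j => ((hident j).comp hR).tail_eq
  have hTG : ∀ x, tail P (Y 0) x ≤ tail P S x := tail_le_tail fun ω =>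
    radialSup_mono hAinc h0 (Finset.single_le_sum (f := fun i => X i ω) (fun i _ => hpos i ω)
      (Finset.mem_range.2 (by omega)))
  have hGT := eventually_tail_le_mul_of_subadditive hn (fun j _ => hYT j) (fun j _ => hind j)
    hS'S hSY (fun ω => radialSup_sum_le hAconv h0 _ _) hlong hTG hconv
  exact hconv.of_le_of_eventually_le (antitone_tail S) hlong (antitone_tail _) hTG hGT
end
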